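/- arXiv:1706.08050 — 7 statements merged into one kernel-verified Lean document; each statement's English description precedes it below -/
import Mathlib

section
/- Let G be a graph with n vertices and m edges. If the line graph L(G) has an odd cycle transversal of size at most m - n, then G has an even cycle factor. -/
/-!
Delete the edges of `S`: the remaining spanning subgraph `H` has a 2-colourable line graph, i.e. a
proper 2-edge-colouring, so every vertex has `H`-degree at most 2. Since `H` keeps at least `n`
edges, the handshake lemma forces `H` to be 2-regular, and its two colour classes are perfect
matchings, given by fixed-point-free involutions `μ` and `σ`. A walk of length `ℓ` from `u` ends in
the `σ * μ`-orbit of `μ ^ ℓ u`, so an odd closed walk at `v` would put `μ v` in the orbit of `v`.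
That is impossible: each reflection `(σ * μ) ^ k * μ` of the dihedral group generated by `μ` and
`σ` is conjugate to `μ` or to `σ`, hence has no fixed point. So `H` is bipartite.
-/

open SimpleGraph

namespace Paper

variable {V : Type*}

/-- `S` is an independent set of `G`. -/
def IsIndep (G : SimpleGraph V) (S : Set V) : Prop :=
  S.Pairwise fun a b => ¬ G.Adj a b

/-- `S` is a maximal independent set of `G`. -/
def IsMaxIndep (G : SimpleGraph V) (S : Set V) : Prop :=
  IsIndep G S ∧ ∀ v ∉ S, ¬ IsIndep G (insert v S)

/-- `S` is a maximal independent set of the subgraph of `G` induced by `W`. -/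
def IsMaxIndepIn (G : SimpleGraph V) (W S : Set V) : Prop :=
  S ⊆ W ∧ IsIndep G S ∧ ∀ v ∈ W, v ∉ S → ∃ w ∈ S, G.Adj v w

/-- `S` is an odd cycle transversal of `G`: deleting `S` leaves a bipartite graph. -/
def IsOCT (G : SimpleGraph V) (S : Set V) : Prop :=
  (G.induce (Sᶜ : Set V)).Colorable 2

/-- `S` is a minimal odd cycle transversal of `G`. -/
def IsMinOCT (G : SimpleGraph V) (S : Set V) : Prop :=
  IsOCT G S ∧ ∀ T ⊂ S, ¬ IsOCT G T

/-- `S` is a feedback vertex set of `G`: deleting `S` leaves a forest. -/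
def IsFVS (G : SimpleGraph V) (S : Set V) : Prop :=
  (G.induce (Sᶜ : Set V)).IsAcyclic

/-- `S` is a minimal feedback vertex set of `G`. -/
def IsMinFVS (G : SimpleGraph V) (S : Set V) : Prop :=
  IsFVS G S ∧ ∀ T ⊂ S, ¬ IsFVS G T

/-- `S` is a vertex cover of `G`. -/
def IsVC (G : SimpleGraph V) (S : Set V) : Prop :=
  ∀ ⦃a b⦄, G.Adj a b → a ∈ S ∨ b ∈ S

/-- `S` induces a connected subgraph of `G`. -/
def ConnSet (G : SimpleGraph V) (S : Set V) : Prop :=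
  (G.induce S).Connected

/-- The graph `sP₂`: the disjoint union of `s` copies of an edge. -/
def sP2 (s : ℕ) : SimpleGraph (Fin s × Fin 2) where
  Adj p q := p.1 = q.1 ∧ p.2 ≠ q.2
  symm := ⟨fun _ _ h => ⟨h.1.symm, h.2.symm⟩⟩
  loopless := ⟨fun _ h => h.2 rfl⟩

/-- `G` contains an induced subgraph isomorphic to `H`. -/
def HasInducedIso {W : Type*} (G : SimpleGraph V) (H : SimpleGraph W) : Prop :=
  ∃ T : Set V, Nonempty (G.induce T ≃g H)

/-- `G` is `sP₂`-free. -/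
def sP2Free (s : ℕ) (G : SimpleGraph V) : Prop :=
  ¬ HasInducedIso G (sP2 s)

/-- `G` is claw-free: it has no induced `K_{1,3}`. -/
def ClawFree (G : SimpleGraph V) : Prop :=
  ¬ HasInducedIso G (completeBipartiteGraph (Fin 1) (Fin 3))

/-- `G` has an even cycle factor: a spanning 2-regular subgraph with no odd cycle. -/
def HasEvenCycleFactor (G : SimpleGraph V) : Prop :=
  ∃ H : SimpleGraph V, H ≤ G ∧ (∀ v, (H.neighborSet v).ncard = 2) ∧ H.Colorable 2

/-- The number of neighbours of `v` inside the set `F`. -/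
noncomputable def degIn (G : SimpleGraph V) (F : Set V) (v : V) : ℕ :=
  {w | w ∈ F ∧ G.Adj v w}.ncard

/-- `{x, y}` is a component of `G[F]` isomorphic to `P₂`. -/
def IsP2Comp (G : SimpleGraph V) (F : Set V) (x y : V) : Prop :=
  x ∈ F ∧ y ∈ F ∧ G.Adj x y ∧
  (∀ w ∈ F, G.Adj x w → w = y) ∧ (∀ w ∈ F, G.Adj y w → w = x)

/-- `F'` is a skeleton of the forest `G[F]`: all vertices of degree at least 2 in `G[F]`
together with exactly one vertex from each `P₂`-component. -/
def IsSkeleton (G : SimpleGraph V) (F F' : Set V) : Prop :=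
  F' ⊆ F ∧ (∀ v ∈ F, 2 ≤ degIn G F v → v ∈ F') ∧
  (∀ v ∈ F', 2 ≤ degIn G F v ∨ ∃ y, IsP2Comp G F v y) ∧
  (∀ x y, IsP2Comp G F x y → (x ∈ F' ↔ y ∉ F'))

end Paper

namespace Equiv.Perm

variable {V : Type*} {μ σ : Perm V}

lemma apply_zpow_apply_of_involutive (hμ : Function.Involutive μ) (hσ : Function.Involutive σ)
    (k : ℤ) (x : V) : μ (((σ * μ) ^ k) x) = ((σ * μ) ^ (-k)) (μ x) := by
  have hμ' : μ⁻¹ = μ := hμ.symm_eq_self_of_involutive μ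
  have hσ' : σ⁻¹ = σ := hσ.symm_eq_self_of_involutive σ
  have hconj : μ * (σ * μ) * μ⁻¹ = (σ * μ)⁻¹ := by
    rw [mul_inv_rev, hσ', ← mul_assoc, mul_inv_cancel_right, hμ']
  have h := conj_zpow (a := μ) (b := σ * μ) (i := k)
  rw [hconj, inv_zpow', hμ'] at h
  rw [h, mul_apply, mul_apply, hμ x]

lemma SameCycle.apply_of_involutive (hμ : Function.Involutive μ) (hσ : Function.Involutive σ)
    {x y : V} (h : (σ * μ).SameCycle x y) : (σ * μ).SameCycle (μ x) (μ y) := by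
  obtain ⟨k, rfl⟩ := h
  exact ⟨-k, (apply_zpow_apply_of_involutive hμ hσ k x).symm⟩

-- `(σ * μ) ^ (2 * j) * μ` is conjugate to `μ`, and `(σ * μ) ^ (2 * j + 1) * μ` to `σ`.
lemma not_sameCycle_apply_of_involutive (hμ : Function.Involutive μ) (hσ : Function.Involutive σ)
    (hμv : ∀ v, μ v ≠ v) (hσv : ∀ v, σ v ≠ v) (v : V) : ¬ (σ * μ).SameCycle v (μ v) := by
  rintro ⟨k, hk⟩
  obtain ⟨j, rfl | rfl⟩ := k.even_or_odd'
  · apply hμv (((σ * μ) ^ j) v)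
    rw [apply_zpow_apply_of_involutive hμ hσ, ← hk, ← mul_apply, ← zpow_add]
    congr 2
    ring
  · apply hσv (((σ * μ) ^ (j + 1)) v)
    have hσx : ∀ x, σ x = (σ * μ) (μ x) := fun x => by rw [mul_apply, hμ x]
    rw [hσx, apply_zpow_apply_of_involutive hμ hσ, ← hk, ← mul_apply, ← mul_apply,
      ← zpow_one_add, ← zpow_add]
    congr 2
    ring

end Equiv.Perm

namespace SimpleGraph

variable {V : Type*} {G H : SimpleGraph V} {μ σ : Equiv.Perm V}

lemma Walk.sameCycle_pow_length_apply (hμ : Function.Involutive μ) (hσ : Function.Involutive σ)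
    (hadj : ∀ u w, H.Adj u w → w = μ u ∨ w = σ u) {u v : V} (p : H.Walk u v) :
    (σ * μ).SameCycle ((μ ^ p.length) u) v := by
  induction p with
  | nil => exact .refl _ _
  | @cons u w v huw q ih =>
    have hstep : (σ * μ).SameCycle (μ u) w := by
      rcases hadj u w huw with rfl | rfl
      · exact .refl _ _
      · exact ⟨1, by rw [zpow_one, Equiv.Perm.mul_apply, hμ u]⟩
    have hpow : ∀ n : ℕ, (σ * μ).SameCycle ((μ ^ n) (μ u)) ((μ ^ n) w) := by
      intro n
      induction n with
      | zero => exact hstep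
      | succ n ihn =>
        simpa only [pow_succ', Equiv.Perm.mul_apply] using ihn.apply_of_involutive hμ hσ
    rw [Walk.length_cons, pow_succ, Equiv.Perm.mul_apply]
    exact (hpow q.length).trans ih

lemma colorable_two_of_adj_involutive (hμ : Function.Involutive μ) (hσ : Function.Involutive σ)
    (hμv : ∀ v, μ v ≠ v) (hσv : ∀ v, σ v ≠ v) (hadj : ∀ u w, H.Adj u w → w = μ u ∨ w = σ u) :
    H.Colorable 2 := by
  refine two_colorable_iff_forall_loop_even.mpr fun u p => ?_
  by_contra hodd
  obtain ⟨k, hk⟩ := Nat.not_even_iff_odd.mp hodd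
  have hμpow : μ ^ p.length = μ := by
    rw [hk, pow_succ, pow_mul, sq, (Equiv.ext hμ : μ * μ = 1), one_pow, one_mul]
  have h := p.sameCycle_pow_length_apply hμ hσ hadj
  rw [hμpow] at h
  exact Equiv.Perm.not_sameCycle_apply_of_involutive hμ hσ hμv hσv u h.symm

lemma lineGraph_deleteEdges_colorable {S : Set G.edgeSet} {n : ℕ}
    (h : (G.lineGraph.induce Sᶜ).Colorable n) :
    (G.deleteEdges (Subtype.val '' S)).lineGraph.Colorable n := by
  refine h.of_hom
    { toFun e := ⟨⟨e, ((edgeSet_deleteEdges _).subset e.2).1⟩,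
        fun he => ((edgeSet_deleteEdges _).subset e.2).2 ⟨_, he, rfl⟩⟩
      map_rel' := fun {e₁ e₂} hadj => ?_ }
  show G.lineGraph.Adj _ _
  rw [lineGraph_adj_iff_exists] at hadj ⊢
  simpa [Subtype.ext_iff] using hadj

lemma pairwise_lineGraph_adj_neighborSet (v : V) :
    Pairwise fun w w' : H.neighborSet v =>
      H.lineGraph.Adj ⟨s(v, w), w.2⟩ ⟨s(v, w'), w'.2⟩ := by
  intro w w' hne
  refine lineGraph_adj_iff_exists.mpr
    ⟨fun h => hne ?_, v, Sym2.mem_mk_left _ _, Sym2.mem_mk_left _ _⟩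
  exact Subtype.ext (Sym2.congr_right.mp (congrArg Subtype.val h))

lemma ncard_neighborSet_le_of_lineGraph_colorable {n : ℕ} (h : H.lineGraph.Colorable n)
    (v : V) : (H.neighborSet v).ncard ≤ n :=
  h.card_le_of_pairwise_adj _ (pairwise_lineGraph_adj_neighborSet v)

lemma Coloring.eq_of_lineGraph_apply_eq {α : Type*} (c : H.lineGraph.Coloring α) {v w w' : V}
    (hw : H.Adj v w) (hw' : H.Adj v w') (h : c ⟨s(v, w), hw⟩ = c ⟨s(v, w'), hw'⟩) : w = w' :=
  congrArg Subtype.val <| c.injective_comp_of_pairwise_adj _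
    (pairwise_lineGraph_adj_neighborSet v) (a₁ := ⟨w, hw⟩) (a₂ := ⟨w', hw'⟩) h

lemma Coloring.exists_adj_lineGraph_apply_eq {α : Type*} [Finite α]
    (c : H.lineGraph.Coloring α) {v : V} (hv : Nat.card α ≤ (H.neighborSet v).ncard) (i : α) :
    ∃ w, ∃ h : H.Adj v w, c ⟨s(v, w), h⟩ = i := by
  obtain ⟨w, hw⟩ := ((c.injective_comp_of_pairwise_adj _
    (pairwise_lineGraph_adj_neighborSet v)).bijective_of_nat_card_le hv).surjective i
  exact ⟨w, w.2, hw⟩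

lemma ncard_edgeSet_deleteEdges_add_ncard [Finite V] (S : Set G.edgeSet) :
    (G.deleteEdges (Subtype.val '' S)).edgeSet.ncard + S.ncard = G.edgeSet.ncard := by
  rw [edgeSet_deleteEdges, ← Set.ncard_image_of_injective S Subtype.val_injective]
  exact Set.ncard_sdiff_add_ncard_of_subset (Subtype.coe_image_subset _ S)

lemma ncard_neighborSet_eq_of_le [Fintype V] {d : ℕ} (hle : ∀ v, (H.neighborSet v).ncard ≤ d)
    (hm : d * Fintype.card V ≤ 2 * H.edgeSet.ncard) (v : V) : (H.neighborSet v).ncard = d := by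
  classical
  have hdeg : ∀ v, (H.neighborSet v).ncard = H.degree v := fun v => by
    rw [← card_neighborSet_eq_degree, Set.ncard_eq_toFinset_card', Set.toFinset_card]
  have hsum : ∑ v, H.degree v = ∑ _v : V, d := by
    refine le_antisymm (Finset.sum_le_sum fun v _ => hdeg v ▸ hle v) ?_
    rwa [sum_degrees_eq_twice_card_edges, edgeFinset_card, ← Nat.card_eq_fintype_card,
      Nat.card_coe_set_eq, Finset.sum_const, Finset.card_univ, smul_eq_mul, mul_comm]
  rw [hdeg]
  exact (Finset.sum_eq_sum_iff_of_le fun v _ => hdeg v ▸ hle v).mp hsum v (Finset.mem_univ v)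

lemma colorable_two_of_lineGraph_colorable_two (h : H.lineGraph.Colorable 2)
    (hreg : ∀ v, (H.neighborSet v).ncard = 2) : H.Colorable 2 := by
  obtain ⟨c⟩ := h
  choose partner hadj hcol using fun (i : Fin 2) (v : V) =>
    c.exists_adj_lineGraph_apply_eq (v := v) (by simp [hreg v]) i
  have hinv : ∀ i, Function.Involutive (partner i) := fun i v =>
    c.eq_of_lineGraph_apply_eq (hadj i (partner i v)) (hadj i v).symm <| by
      rw [hcol]
      exact ((congrArg c (Subtype.ext Sym2.eq_swap)).trans (hcol i v)).symm
  refine colorable_two_of_adj_involutive (μ := (hinv 0).toPerm) (σ := (hinv 1).toPerm)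
    (hinv 0) (hinv 1) (fun v => (hadj 0 v).ne') (fun v => (hadj 1 v).ne')
    fun u w huw => ?_
  have hw := c.eq_of_lineGraph_apply_eq huw (hadj _ u) (hcol _ u).symm
  generalize c ⟨s(u, w), huw⟩ = i at hw
  fin_cases i
  exacts [.inl hw, .inr hw]

end SimpleGraph

namespace Paper

variable {V : Type*}

/-- If the line graph `L(G)` has an odd cycle transversal of size at most `m - n`,
then `G` has an even cycle factor. -/
theorem oct_of_line_graph_gives_even_cycle_factor {V : Type*} [Fintype V] (G : SimpleGraph V)
    (S : Set G.edgeSet) (hS : IsOCT G.lineGraph S)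
    (hsize : (S.ncard : ℤ) ≤ (G.edgeSet.ncard : ℤ) - (Fintype.card V : ℤ)) :
    HasEvenCycleFactor G := by
  have hm := ncard_edgeSet_deleteEdges_add_ncard S
  set H := G.deleteEdges (Subtype.val '' S)
  have hcol : H.lineGraph.Colorable 2 := lineGraph_deleteEdges_colorable hS
  have hreg : ∀ v, (H.neighborSet v).ncard = 2 :=
    ncard_neighborSet_eq_of_le (ncard_neighborSet_le_of_lineGraph_colorable hcol) (by omega)
  exact ⟨H, deleteEdges_le _, hreg, colorable_two_of_lineGraph_colorable_two hcol hreg⟩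
end Paper
end

section
/- If G has an even cycle factor, then the line graph L(G) has an odd cycle transversal of size exactly m - n, where n and m are the numbers of vertices and edges of G. Hence G has an even cycle factor if and only if L(G) has an odd cycle transversal of size at most m - n. -/
/-!
The complement of a set `S` of vertices of `L(G)` is the edge set of `G - S`, and
`L(G) - S = L(G - S)`. The key fact is that a 2-regular graph `H` is bipartite iff `L(H)` is.
If `H` is bipartite, Hall's theorem gives a perfect matching, and "in the matching or not" is a
proper 2-colouring of the edges. Conversely, in a proper 2-edge-colouring of `H` each colour
class is a fixed-point-free involution (`σ` and `τ`) of the vertices. A walk of length `n` from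
`u` ends at `σ ^ n ((σ τ) ^ k u)`, so an odd closed walk would give `(σ τ) ^ k u = σ u`, which
forces a fixed point of `σ` or `τ`.

For the count: a proper 2-edge-colouring of `G - S` bounds all degrees by 2. Hence
`|E(G - S)| ≥ n` forces `G - S` to be 2-regular, and a 2-regular graph has exactly `n` edges.
-/

open SimpleGraph

theorem Set.eq_or_eq_of_ncard_eq_two {α : Type*} {s : Set α} (hs : s.ncard = 2) {a b c : α}
    (ha : a ∈ s) (hb : b ∈ s) (hab : a ≠ b) (hc : c ∈ s) : c = a ∨ c = b := by
  obtain ⟨x, y, -, rfl⟩ := Set.ncard_eq_two.mp hs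
  simp only [Set.mem_insert_iff, Set.mem_singleton_iff] at ha hb hc
  grind

namespace SimpleGraph

variable {V : Type*} {H : SimpleGraph V}

section Involutions

variable {σ τ : Equiv.Perm V}

lemma mul_zpow_of_involutive (hσ : Function.Involutive σ) (hτ : Function.Involutive τ) (k : ℤ) :
    σ * (σ * τ) ^ k = (σ * τ) ^ (-k) * σ := by
  have hconj : SemiconjBy σ (σ * τ) (σ * τ)⁻¹ := by
    ext v
    simp [Equiv.Perm.inv_def, hσ (τ v), hτ.symm_eq_self_of_involutive]
  rw [zpow_neg, ← inv_zpow]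
  exact hconj.zpow_right k

lemma Walk.exists_eq_pow_mul_zpow_apply (hσ : Function.Involutive σ)
    (hτ : Function.Involutive τ) (hadj : ∀ ⦃u v⦄, H.Adj u v → v = σ u ∨ v = τ u) {u v : V}
    (p : H.Walk u v) : ∃ k : ℤ, v = (σ ^ p.length * (σ * τ) ^ k) u := by
  induction p with
  | nil => exact ⟨0, by simp⟩
  | @cons u u' v h p ih =>
    obtain ⟨k, hk⟩ := ih
    rw [Walk.length_cons]
    generalize p.length = n at hk ⊢
    subst hk
    simp_rw [pow_succ, mul_assoc, mul_zpow_of_involutive hσ hτ, Equiv.Perm.mul_apply]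
    rcases hadj h with rfl | rfl
    · exact ⟨-k, by rw [neg_neg]⟩
    · -- `τ = (σ * τ)⁻¹ * σ`
      refine ⟨1 - k, ?_⟩
      rw [neg_sub, sub_eq_add_neg, zpow_add, zpow_neg_one, Equiv.Perm.mul_apply,
        ← Equiv.Perm.mul_apply (σ * τ)⁻¹]
      simp [Equiv.Perm.inv_def, hτ.symm_eq_self_of_involutive]

lemma zpow_mul_apply_ne (hσ : Function.Involutive σ) (hτ : Function.Involutive τ)
    (hσv : ∀ v, σ v ≠ v) (hτv : ∀ v, τ v ≠ v) (k : ℤ) (v : V) : ((σ * τ) ^ k) v ≠ σ v := by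
  intro hk
  have hσπ (j : ℤ) (x : V) : σ (((σ * τ) ^ j) x) = ((σ * τ) ^ (-j)) (σ x) := by
    rw [← Equiv.Perm.mul_apply, mul_zpow_of_involutive hσ hτ, Equiv.Perm.mul_apply]
  obtain ⟨j, rfl | rfl⟩ := Int.even_or_odd' k
  · apply hσv (((σ * τ) ^ j) v)
    rw [hσπ, ← hk, ← Equiv.Perm.mul_apply, ← zpow_add]
    congr 2
    ring
  · apply hτv (((σ * τ) ^ j) v)
    calc τ (((σ * τ) ^ j) v) = σ (((σ * τ) ^ (j + 1)) v) := by
          rw [add_comm, zpow_one_add, Equiv.Perm.mul_apply, Equiv.Perm.mul_apply, hσ]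
      _ = ((σ * τ) ^ j) v := by
          rw [hσπ, ← hk, ← Equiv.Perm.mul_apply, ← zpow_add]
          congr 2
          ring

theorem colorable_two_of_adj_involutions (hσ : Function.Involutive σ)
    (hτ : Function.Involutive τ) (hσv : ∀ v, σ v ≠ v) (hτv : ∀ v, τ v ≠ v)
    (hadj : ∀ ⦃u v⦄, H.Adj u v → v = σ u ∨ v = τ u) : H.Colorable 2 := by
  refine two_colorable_iff_forall_loop_even.mpr fun u p => ?_
  by_contra hodd
  obtain ⟨m, hm⟩ := Nat.not_even_iff_odd.mp hodd
  obtain ⟨k, hk⟩ := p.exists_eq_pow_mul_zpow_apply hσ hτ hadj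
  have hσ2 : σ ^ 2 = 1 := Equiv.ext hσ
  rw [hm, pow_succ, pow_mul, hσ2, one_pow, one_mul, Equiv.Perm.mul_apply] at hk
  exact zpow_mul_apply_ne hσ hτ hσv hτv k u (by rw [← hσ (((σ * τ) ^ k) u), ← hk])

end Involutions

def IsProperEdgeLabeling {α : Type*} (H : SimpleGraph V) (ℓ : Sym2 V → α) : Prop :=
  ∀ ⦃v w w'⦄, H.Adj v w → H.Adj v w' → w ≠ w' → ℓ s(v, w) ≠ ℓ s(v, w')

lemma lineGraph_colorable_iff {n : ℕ} [NeZero n] :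
    H.lineGraph.Colorable n ↔ ∃ ℓ : Sym2 V → Fin n, H.IsProperEdgeLabeling ℓ := by
  classical
  constructor
  · rintro ⟨c⟩
    refine ⟨fun e => if he : e ∈ H.edgeSet then c ⟨e, he⟩ else 0, fun v w w' hw hw' hne => ?_⟩
    dsimp only
    rw [dif_pos (H.mem_edgeSet.mpr hw), dif_pos (H.mem_edgeSet.mpr hw')]
    refine c.valid (lineGraph_adj_iff_exists.mpr
      ⟨?_, v, Sym2.mem_mk_left _ _, Sym2.mem_mk_left _ _⟩)
    exact fun h => hne (Sym2.congr_right.mp (congrArg Subtype.val h))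
  · rintro ⟨ℓ, hℓ⟩
    refine ⟨Coloring.mk (fun e => ℓ e) fun {e f} hef => ?_⟩
    obtain ⟨hne, v, hve, hvf⟩ := lineGraph_adj_iff_exists.mp hef
    obtain ⟨w, hw⟩ := Sym2.mem_iff_exists.mp hve
    obtain ⟨w', hw'⟩ := Sym2.mem_iff_exists.mp hvf
    have hadj : H.Adj v w := by rw [← mem_edgeSet, ← hw]; exact e.2
    have hadj' : H.Adj v w' := by rw [← mem_edgeSet, ← hw']; exact f.2
    simpa [hw, hw'] using hℓ hadj hadj' fun h => hne (Subtype.ext (by rw [hw, hw', h]))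

lemma IsProperEdgeLabeling.ncard_neighborSet_le {α : Type*} [Finite α] {ℓ : Sym2 V → α}
    (hℓ : H.IsProperEdgeLabeling ℓ) (v : V) : (H.neighborSet v).ncard ≤ Nat.card α := by
  rw [← Set.ncard_univ]
  exact Set.ncard_le_ncard_of_injOn (fun w => ℓ s(v, w)) (fun _ _ => Set.mem_univ _)
    fun w hw w' hw' h => by_contra fun hne => hℓ hw hw' hne h

lemma IsProperEdgeLabeling.existsUnique_adj {ℓ : Sym2 V → Fin 2} (hℓ : H.IsProperEdgeLabeling ℓ)
    (hreg : ∀ v, (H.neighborSet v).ncard = 2) (v : V) (i : Fin 2) :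
    ∃! w, H.Adj v w ∧ ℓ s(v, w) = i := by
  obtain ⟨w₁, w₂, hne, hN⟩ := Set.ncard_eq_two.mp (hreg v)
  have h₁ : H.Adj v w₁ := by simp [← mem_neighborSet, hN]
  have h₂ : H.Adj v w₂ := by simp [← mem_neighborSet, hN]
  have hℓ₁₂ := hℓ h₁ h₂ hne
  refine existsUnique_of_exists_of_unique ?_ fun x y ⟨hx, hxi⟩ ⟨hy, hyi⟩ => ?_
  · obtain hi | hi : i = ℓ s(v, w₁) ∨ i = ℓ s(v, w₂) := by omega
    exacts [⟨w₁, h₁, hi.symm⟩, ⟨w₂, h₂, hi.symm⟩]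
  · exact by_contra fun hxy => hℓ hx hy hxy (hxi.trans hyi.symm)

theorem IsProperEdgeLabeling.colorable_two {ℓ : Sym2 V → Fin 2} (hℓ : H.IsProperEdgeLabeling ℓ)
    (hreg : ∀ v, (H.neighborSet v).ncard = 2) : H.Colorable 2 := by
  choose σ hσ hσ_unique using hℓ.existsUnique_adj hreg
  have hinv (i : Fin 2) : Function.Involutive (σ · i) := fun v =>
    (hσ_unique _ i v ⟨(hσ v i).1.symm, by rw [Sym2.eq_swap]; exact (hσ v i).2⟩).symm
  refine colorable_two_of_adj_involutions (σ := (hinv 0).toPerm) (τ := (hinv 1).toPerm)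
    (hinv 0) (hinv 1) (fun v => (hσ v 0).1.ne') (fun v => (hσ v 1).1.ne') fun u v huv => ?_
  obtain hi | hi : ℓ s(u, v) = 0 ∨ ℓ s(u, v) = 1 := by omega
  exacts [Or.inl (hσ_unique u 0 v ⟨huv, hi⟩), Or.inr (hσ_unique u 1 v ⟨huv, hi⟩)]

lemma ncard_le_ncard_biUnion_neighborSet_of_regular [Finite V] {d : ℕ} (hd : 0 < d)
    (hreg : ∀ v, (H.neighborSet v).ncard = d) (s : Set V) :
    s.ncard ≤ (⋃ x ∈ s, H.neighborSet x).ncard := by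
  classical
  have := Fintype.ofFinite V
  rw [Set.ncard_eq_toFinset_card' s, Set.ncard_eq_toFinset_card' (⋃ x ∈ s, H.neighborSet x)]
  refine Nat.le_of_mul_le_mul_right (Finset.card_mul_le_card_mul H.Adj ?_ ?_) hd
  · intro a ha
    rw [← hreg a, Set.ncard_eq_toFinset_card']
    refine Finset.card_le_card fun w hw => ?_
    rw [Set.mem_toFinset] at ha hw
    rw [Finset.mem_bipartiteAbove, Set.mem_toFinset, Set.mem_iUnion₂]
    exact ⟨⟨a, ha, hw⟩, hw⟩
  · intro b _
    rw [← hreg b, Set.ncard_eq_toFinset_card']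
    refine Finset.card_le_card fun a ha => ?_
    simp_all [Finset.mem_bipartiteBelow, adj_comm]

lemma IsBipartite.exists_isPerfectMatching_of_regular [Finite V] (hH : H.IsBipartite) {d : ℕ}
    (hd : 0 < d) (hreg : ∀ v, (H.neighborSet v).ncard = d) :
    ∃ M : H.Subgraph, M.IsPerfectMatching := by
  classical
  have := Fintype.ofFinite V
  obtain ⟨s, t, hst⟩ := hH.exists_isBipartiteWith
  exact exists_isPerfectMatching_of_forall_ncard_le hst
    (ncard_le_ncard_biUnion_neighborSet_of_regular hd hreg)

lemma lineGraph_colorable_two_of_isPerfectMatching {M : H.Subgraph} (hM : M.IsPerfectMatching)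
    (hreg : ∀ v, (H.neighborSet v).ncard = 2) : H.lineGraph.Colorable 2 := by
  classical
  refine lineGraph_colorable_iff.mpr ⟨fun e => if e ∈ M.edgeSet then 0 else 1,
    fun v w w' hw hw' hne => ?_⟩
  obtain ⟨x, hx, hx_unique⟩ := Subgraph.isPerfectMatching_iff.mp hM v
  simp only [Subgraph.mem_edgeSet]
  obtain rfl | rfl := Set.eq_or_eq_of_ncard_eq_two (hreg v) hw hw' hne (M.adj_sub hx)
  · rw [if_pos hx, if_neg fun h => hne (hx_unique w' h).symm]
    decide
  · rw [if_neg fun h => hne (hx_unique w h), if_pos hx]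
    decide

theorem colorable_two_iff_lineGraph_colorable_two [Finite V]
    (hreg : ∀ v, (H.neighborSet v).ncard = 2) : H.Colorable 2 ↔ H.lineGraph.Colorable 2 := by
  refine ⟨fun h => ?_, fun h => ?_⟩
  · obtain ⟨M, hM⟩ := IsBipartite.exists_isPerfectMatching_of_regular h two_pos hreg
    exact lineGraph_colorable_two_of_isPerfectMatching hM hreg
  · obtain ⟨ℓ, hℓ⟩ := lineGraph_colorable_iff.mp h
    exact hℓ.colorable_two hreg

lemma sum_ncard_neighborSet [Fintype V] (H : SimpleGraph V) :
    ∑ v, (H.neighborSet v).ncard = 2 * H.edgeSet.ncard := by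
  classical
  have hdeg (v : V) : (H.neighborSet v).ncard = H.degree v := by
    rw [Set.ncard_eq_toFinset_card', ← neighborFinset_def, ← degree]
  rw [Finset.sum_congr rfl fun v _ => hdeg v, sum_degrees_eq_twice_card_edges,
    Set.ncard_eq_toFinset_card' H.edgeSet, edgeFinset]

lemma two_mul_ncard_edgeSet_of_regular [Fintype V] {d : ℕ}
    (hreg : ∀ v, (H.neighborSet v).ncard = d) : 2 * H.edgeSet.ncard = Fintype.card V * d := by
  simp [← sum_ncard_neighborSet, hreg, mul_comm]

lemma forall_ncard_neighborSet_eq_of_le [Fintype V] {d : ℕ}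
    (hle : ∀ v, (H.neighborSet v).ncard ≤ d) (hcard : Fintype.card V * d ≤ 2 * H.edgeSet.ncard)
    (v : V) : (H.neighborSet v).ncard = d := by
  have hsum : ∑ v, (H.neighborSet v).ncard = ∑ _v : V, d := by
    refine le_antisymm (Finset.sum_le_sum fun v _ => hle v) ?_
    simpa [sum_ncard_neighborSet] using hcard
  exact (Finset.sum_eq_sum_iff_of_le fun v _ => hle v).mp hsum v (Finset.mem_univ v)

lemma mem_edgeSet_deleteEdges_image_val {G : SimpleGraph V} {S : Set G.edgeSet}
    {e : G.edgeSet} :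
    e.1 ∈ (G.deleteEdges (Subtype.val '' S)).edgeSet ↔ e ∉ S := by
  simp [edgeSet_deleteEdges, e.2]

def lineGraphInduceComplIso (G : SimpleGraph V) (S : Set G.edgeSet) :
    G.lineGraph.induce Sᶜ ≃g (G.deleteEdges (Subtype.val '' S)).lineGraph where
  toFun e := ⟨e.1.1, mem_edgeSet_deleteEdges_image_val.mpr e.2⟩
  invFun e :=
    ⟨⟨e.1, edgeSet_mono (deleteEdges_le _) e.2⟩, mem_edgeSet_deleteEdges_image_val.mp e.2⟩
  left_inv e := rfl
  right_inv e := rfl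
  map_rel_iff' := by
    simp [lineGraph, Subtype.ext_iff]

lemma ncard_add_ncard_edgeSet_deleteEdges [Finite V] (G : SimpleGraph V) (S : Set G.edgeSet) :
    S.ncard + (G.deleteEdges (Subtype.val '' S)).edgeSet.ncard = G.edgeSet.ncard := by
  rw [edgeSet_deleteEdges, add_comm, ← Set.ncard_image_of_injective S Subtype.val_injective,
    Set.ncard_sdiff_add_ncard_of_subset (by simp)]

lemma deleteEdges_image_setOf_notMem_edgeSet {G H : SimpleGraph V} (h : H ≤ G) :
    G.deleteEdges (Subtype.val '' {e : G.edgeSet | e.1 ∉ H.edgeSet}) = H := by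
  rw [← deleteEdges_sdiff_eq_of_le h]
  congr
  ext
  simp [and_comm]

end SimpleGraph

namespace Paper

variable {V : Type*}

lemma isOCT_lineGraph_iff (G : SimpleGraph V) (S : Set G.edgeSet) :
    IsOCT G.lineGraph S ↔ (G.deleteEdges (Subtype.val '' S)).lineGraph.Colorable 2 :=
  ⟨.of_hom (G.lineGraphInduceComplIso S).symm.toHom, .of_hom (G.lineGraphInduceComplIso S).toHom⟩

/-- If `G` has an even cycle factor then `L(G)` has an odd cycle transversal of size
exactly `m - n`; hence `G` has an even cycle factor iff `L(G)` has an odd cycle transversal of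
size at most `m - n`. -/
theorem even_cycle_factor_iff_line_graph_oct {V : Type*} [Fintype V] (G : SimpleGraph V) :
    (HasEvenCycleFactor G →
      ∃ S : Set G.edgeSet, IsOCT G.lineGraph S ∧
        (S.ncard : ℤ) = (G.edgeSet.ncard : ℤ) - (Fintype.card V : ℤ)) ∧
    (HasEvenCycleFactor G ↔
      ∃ S : Set G.edgeSet, IsOCT G.lineGraph S ∧
        (S.ncard : ℤ) ≤ (G.edgeSet.ncard : ℤ) - (Fintype.card V : ℤ)) := by
  have exists_oct : HasEvenCycleFactor G → ∃ S : Set G.edgeSet, IsOCT G.lineGraph S ∧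
      (S.ncard : ℤ) = (G.edgeSet.ncard : ℤ) - (Fintype.card V : ℤ) := by
    rintro ⟨H, hHG, hreg, hbip⟩
    have hdel := deleteEdges_image_setOf_notMem_edgeSet hHG
    refine ⟨{e | e.1 ∉ H.edgeSet}, ?_, ?_⟩
    · rw [isOCT_lineGraph_iff, hdel]
      exact (colorable_two_iff_lineGraph_colorable_two hreg).mp hbip
    · have hcount := ncard_add_ncard_edgeSet_deleteEdges G {e | e.1 ∉ H.edgeSet}
      have hedges := two_mul_ncard_edgeSet_of_regular hreg
      rw [hdel] at hcount
      omega
  refine ⟨exists_oct, fun h => (exists_oct h).imp fun S hS => ⟨hS.1, hS.2.le⟩, ?_⟩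
  rintro ⟨S, hoct, hcard⟩
  rw [isOCT_lineGraph_iff] at hoct
  obtain ⟨ℓ, hℓ⟩ := lineGraph_colorable_iff.mp hoct
  have hcount := ncard_add_ncard_edgeSet_deleteEdges G S
  have hreg := forall_ncard_neighborSet_eq_of_le (fun v => (hℓ.ncard_neighborSet_le v).trans_eq
    (Nat.card_fin 2)) (by omega)
  exact ⟨_, deleteEdges_le _, hreg, (colorable_two_iff_lineGraph_colorable_two hreg).mpr hoct⟩
end Paper
end

section
/- If an odd cycle transversal S of a graph G is minimal (no proper subset of S is an odd cycle transversal) and one of the endpoints u, v of a twice-subdivided edge lies in a minimal odd cycle transversal S' of the subdivided graph G', then neither of the two new subdivision vertices lies in S'. -/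
open SimpleGraph

namespace Paper

variable {V : Type*}

/-- The graph obtained from `G` by subdividing the edge `uv` twice: the edge `uv` is removed and
replaced by the path `u - a - b - v` through two new vertices `a = Sum.inr 0`, `b = Sum.inr 1`. -/
def subdivideTwice (G : SimpleGraph V) (u v : V) : SimpleGraph (V ⊕ Fin 2) :=
  SimpleGraph.fromRel fun x y =>
    (∃ a b : V, x = Sum.inl a ∧ y = Sum.inl b ∧ G.Adj a b ∧ s(a, b) ≠ s(u, v)) ∨
    (x = Sum.inl u ∧ y = Sum.inr 0) ∨
    (x = Sum.inr 0 ∧ y = Sum.inr 1) ∨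
    (x = Sum.inr 1 ∧ y = Sum.inl v)

/-! Once `u` or `v` is deleted, the path `a - b` hangs off the rest of `G'` at a single vertex, so a
two-colouring of `G' - S'` extends to `b` and `a` one vertex at a time, starting from the end
farther from the deleted endpoint. Hence `S' \ {a, b}` is still an odd cycle transversal, and the
minimality of `S'` forces `a, b ∉ S'`. -/

lemma IsOCT.mono {G : SimpleGraph V} {S T : Set V} (hST : S ⊆ T) (hS : IsOCT G S) :
    IsOCT G T :=
  hS.of_hom (G.induceHomOfLE (Set.compl_subset_compl.2 hST)).toHom

lemma IsOCT.diff_singleton_of_adj {G : SimpleGraph V} {S : Set V} {x y : V} (hS : IsOCT G S)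
    (hx : ∀ w, G.Adj x w → w ≠ y → w ∈ S) : IsOCT G (S \ {x}) := by
  classical
  obtain ⟨c⟩ := hS
  let colour (z : V) : Fin 2 := if h : z ∈ Sᶜ then c ⟨z, h⟩ else 0
  -- `x` gets the colour opposite to its only possible neighbour `y` outside `S`
  let colour' (z : ((S \ {x})ᶜ : Set V)) : Fin 2 := if (z : V) ∈ Sᶜ then colour z else colour y + 1
  have eq_x {z : ((S \ {x})ᶜ : Set V)} (hz : (z : V) ∉ Sᶜ) : (z : V) = x := by
    by_contra hzx
    exact z.2 ⟨not_not.1 hz, hzx⟩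
  have valid_at_x {z w : ((S \ {x})ᶜ : Set V)} (hz : (z : V) ∉ Sᶜ) (hzw : G.Adj z w) :
      colour' z ≠ colour' w := by
    have hxw : G.Adj x w := by simpa only [← eq_x hz] using hzw
    have hwx : (w : V) ≠ x := hxw.ne.symm
    have hwy : (w : V) = y := by
      by_contra hwy
      exact w.2 ⟨hx w hxw hwy, hwx⟩
    have hwS : (w : V) ∈ Sᶜ := fun hwS => w.2 ⟨hwS, hwx⟩
    simp only [colour', if_neg hz, if_pos hwS, hwy]
    exact add_ne_left.2 one_ne_zero
  refine ⟨Coloring.mk colour' fun {z w} hzw => ?_⟩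
  by_cases hz : (z : V) ∈ Sᶜ
  · by_cases hw : (w : V) ∈ Sᶜ
    · simpa only [colour', colour, if_pos hz, if_pos hw, dif_pos hz, dif_pos hw] using
        c.valid (show (G.induce Sᶜ).Adj ⟨z, hz⟩ ⟨w, hw⟩ from hzw)
    · exact (valid_at_x hw hzw.symm).symm
  · exact valid_at_x hz hzw

lemma IsMinOCT.notMem_of_isOCT_diff {G : SimpleGraph V} {S X : Set V} {x : V}
    (hS : IsMinOCT G S) (hSX : IsOCT G (S \ X)) (hx : x ∈ X) : x ∉ S := fun hxS =>
  hS.2 _ (Set.sdiff_subset.ssubset_of_mem_notMem hxS fun h => h.2 hx) hSX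

section subdivideTwice

variable {G : SimpleGraph V} {u v : V}

lemma subdivideTwice_adj_inr_zero {x : V ⊕ Fin 2} (h : (subdivideTwice G u v).Adj (.inr 0) x) :
    x = .inl u ∨ x = .inr 1 := by
  simp only [subdivideTwice, fromRel_adj] at h
  obtain ⟨-, h | h⟩ := h <;>
    rcases h with ⟨a, b, h1, h2, -⟩ | ⟨h1, h2⟩ | ⟨h1, h2⟩ | ⟨h1, h2⟩ <;> simp_all

lemma subdivideTwice_adj_inr_one {x : V ⊕ Fin 2} (h : (subdivideTwice G u v).Adj (.inr 1) x) :
    x = .inl v ∨ x = .inr 0 := by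
  simp only [subdivideTwice, fromRel_adj] at h
  obtain ⟨-, h | h⟩ := h <;>
    rcases h with ⟨a, b, h1, h2, -⟩ | ⟨h1, h2⟩ | ⟨h1, h2⟩ | ⟨h1, h2⟩ <;> simp_all

lemma IsOCT.diff_subdivideTwice {S : Set (V ⊕ Fin 2)} (hS : IsOCT (subdivideTwice G u v) S)
    (hends : .inl u ∈ S ∨ .inl v ∈ S) : IsOCT (subdivideTwice G u v) (S \ {.inr 0, .inr 1}) := by
  have hbig : IsOCT (subdivideTwice G u v) (S ∪ {.inr 0, .inr 1}) :=
    hS.mono Set.subset_union_left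
  rcases hends with hu | hv
  · have hb := hbig.diff_singleton_of_adj (x := .inr 1) (y := .inl v) fun w hw hwv => by
      rcases subdivideTwice_adj_inr_one hw with rfl | rfl <;> simp_all
    have ha := hb.diff_singleton_of_adj (x := .inr 0) (y := .inr 1) fun w hw hwb => by
      rcases subdivideTwice_adj_inr_zero hw with rfl | rfl <;> simp_all
    convert ha using 1
    ext; simp only [Set.mem_sdiff, Set.mem_union, Set.mem_insert_iff, Set.mem_singleton_iff]; tauto
  · have ha := hbig.diff_singleton_of_adj (x := .inr 0) (y := .inl u) fun w hw hwu => by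
      rcases subdivideTwice_adj_inr_zero hw with rfl | rfl <;> simp_all
    have hb := ha.diff_singleton_of_adj (x := .inr 1) (y := .inr 0) fun w hw hwa => by
      rcases subdivideTwice_adj_inr_one hw with rfl | rfl <;> simp_all
    convert hb using 1
    ext; simp only [Set.mem_sdiff, Set.mem_union, Set.mem_insert_iff, Set.mem_singleton_iff]; tauto

end subdivideTwice

theorem min_oct_subdivide_twice_avoids_new_vertices_general {V : Type*} (G : SimpleGraph V) (u v : V)
    (S' : Set (V ⊕ Fin 2)) (hS' : IsMinOCT (subdivideTwice G u v) S')
    (hends : Sum.inl u ∈ S' ∨ Sum.inl v ∈ S') :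
    Sum.inr 0 ∉ S' ∧ Sum.inr 1 ∉ S' := by
  have hdiff := hS'.1.diff_subdivideTwice hends
  exact ⟨hS'.notMem_of_isOCT_diff hdiff (by simp), hS'.notMem_of_isOCT_diff hdiff (by simp)⟩

/-- If `S` is a minimal odd cycle transversal of `G` and one of `u, v` lies in a
minimal odd cycle transversal `S'` of the twice-subdivided graph `G'`, then neither new
subdivision vertex lies in `S'`. -/
theorem min_oct_subdivide_twice_avoids_new_vertices {V : Type*} (G : SimpleGraph V) (u v : V)
    (huv : G.Adj u v) (S : Set V) (hS : IsMinOCT G S)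
    (S' : Set (V ⊕ Fin 2)) (hS' : IsMinOCT (subdivideTwice G u v) S')
    (hends : Sum.inl u ∈ S' ∨ Sum.inl v ∈ S') :
    Sum.inr 0 ∉ S' ∧ Sum.inr 1 ∉ S' :=
  min_oct_subdivide_twice_avoids_new_vertices_general G u v S' hS' hends
end Paper
end

section
/- For every s ≥ 1, the number of maximal independent sets of an sP_2-free graph on n vertices is at most n^{2s} + 1. -/
open SimpleGraph

namespace Paper

variable {V : Type*}

/-!
Write `R = N[u] ∪ N[x]` for the closed neighbourhoods of the ends of an edge `ux`. If `W` spans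
an edge, a maximal independent set `S` of `G[W]` misses a vertex of `W`; choose `x ∈ W \ S` with
the fewest neighbours in `S` and a neighbour `u ∈ S` of `x`. By the choice of `x`, every vertex
of `W \ S` not adjacent to `u` has a neighbour in `T = S \ R` (otherwise its neighbours in `S`
would all be neighbours of `x` other than `u`), so `T` is a maximal independent
set of `G[W \ R]`, and `S` is recovered from `(u, x, T)`. Adding the edge `ux` to an induced
matching of `G[W \ R]` gives an induced matching of `G[W]`, so induction on `s` bounds the
number of maximal independent sets of `G[W]` by `max 1 (|W| ^ (2s - 2))`.
-/

section

variable {G : SimpleGraph V}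

def closedNbhd (G : SimpleGraph V) (v : V) : Set V :=
  insert v (G.neighborSet v)

@[simp]
lemma mem_closedNbhd {v w : V} : w ∈ closedNbhd G v ↔ w = v ∨ G.Adj v w := by
  simp [closedNbhd]

lemma isMaxIndep_iff_isMaxIndepIn_univ {S : Set V} :
    IsMaxIndep G S ↔ IsMaxIndepIn G Set.univ S := by
  have : Std.Symm fun a b => ¬ G.Adj a b := ⟨fun _ _ h h' => h h'.symm⟩
  simp only [IsMaxIndep, IsMaxIndepIn, IsIndep, Set.subset_univ, Set.mem_univ, true_and,
    forall_const]
  refine and_congr_right fun hS => forall₂_congr fun v hv => ?_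
  rw [Set.pairwise_insert_of_symm_of_notMem hv]
  simp [hS]

lemma setOf_isMaxIndepIn_eq_singleton {W : Set V} (hW : ∀ a ∈ W, ∀ b ∈ W, ¬ G.Adj a b) :
    {S | IsMaxIndepIn G W S} = {W} := by
  ext S
  refine ⟨fun ⟨hSW, _, hmax⟩ => hSW.antisymm fun v hv => ?_, ?_⟩
  · by_contra hvS
    obtain ⟨w, hwS, hvw⟩ := hmax v hv hvS
    exact hW v hv w (hSW hwS) hvw
  · rintro rfl
    exact ⟨subset_rfl, fun a ha b hb _ => hW a ha b hb, fun v hv hv' => absurd hv hv'⟩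

lemma sP2Free.not_isIndContained {s : ℕ} (h : sP2Free s G) : ¬ sP2 s ⊴ G := fun hc => by
  obtain ⟨T, ⟨e⟩⟩ := isIndContained_iff_exists_iso_induce.1 hc
  exact h ⟨T, ⟨e.symm⟩⟩

lemma injective_of_adj_iff_sP2_adj {k : ℕ} {f : Fin k × Fin 2 → V}
    (hf : ∀ {p q}, G.Adj (f p) (f q) ↔ (sP2 k).Adj p q) : Function.Injective f := by
  rintro ⟨i, a⟩ ⟨i', b⟩ hpq
  -- `(i', b)` is adjacent to the partner `(i, a + 1)` of `(i, a)`, so it is `(i, a)` itself.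
  obtain ⟨rfl, hb⟩ : (sP2 k).Adj (i', b) (i, a + 1) :=
    hf.1 (hpq ▸ hf.2 ⟨rfl, by fin_cases a <;> simp⟩)
  fin_cases a <;> fin_cases b <;> simp_all

lemma exists_sP2_succ_embedding {k : ℕ} (e : sP2 k ↪g G) {u x : V} (hux : G.Adj u x)
    (he : ∀ p, e p ∉ closedNbhd G u ∪ closedNbhd G x) :
    ∃ e' : sP2 (k + 1) ↪g G, Set.range e' ⊆ insert u (insert x (Set.range e)) := by
  let f : Fin (k + 1) × Fin 2 → V := fun p => Fin.cases (![u, x] p.2) (fun i => e (i, p.2)) p.1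
  have hf : ∀ {p q}, G.Adj (f p) (f q) ↔ (sP2 (k + 1)).Adj p q := by
    rintro ⟨i, j⟩ ⟨i', j'⟩
    cases i using Fin.cases with
    | zero =>
      cases i' using Fin.cases with
      | zero => fin_cases j <;> fin_cases j' <;> simp [f, sP2, hux, hux.symm]
      | succ i' =>
        have := he (i', j')
        fin_cases j <;> simp_all [f, sP2, eq_comm]
    | succ i =>
      cases i' using Fin.cases with
      | zero =>
        have := he (i, j)
        fin_cases j' <;> simp_all [f, sP2, G.adj_comm]
      | succ i' => simpa [f, sP2] using e.map_adj_iff (v := (i, j)) (w := (i', j'))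
  refine ⟨⟨⟨f, injective_of_adj_iff_sP2_adj hf⟩, hf⟩, ?_⟩
  rintro _ ⟨⟨i, j⟩, rfl⟩
  cases i using Fin.cases with
  | zero => fin_cases j <;> simp [f]
  | succ i => exact .inr (.inr ⟨(i, j), rfl⟩)

lemma not_range_subset_diff_closedNbhd {k : ℕ} {W : Set V}
    (hW : ∀ e : sP2 (k + 1) ↪g G, ¬ Set.range e ⊆ W) {u x : V} (hu : u ∈ W) (hx : x ∈ W)
    (hux : G.Adj u x) (e : sP2 k ↪g G) :
    ¬ Set.range e ⊆ W \ (closedNbhd G u ∪ closedNbhd G x) := fun he => by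
  obtain ⟨e', he'⟩ := exists_sP2_succ_embedding e hux fun p => (he ⟨p, rfl⟩).2
  exact hW e' (he'.trans (Set.insert_subset hu (Set.insert_subset hx (he.trans Set.sdiff_subset))))

def recover (G : SimpleGraph V) (W : Set V) (u x : V) (T : Set V) : Set V :=
  insert u (T ∪ {z ∈ W | G.Adj x z ∧ ¬ G.Adj u z ∧ ∀ t ∈ T, ¬ G.Adj t z})

variable {W S : Set V} {u x : V}

lemma exists_adj_diff_closedNbhd [Finite V] {z : V} (hS : IsIndep G S) (hu : u ∈ S)
    (hux : G.Adj u x) (hmin : (S ∩ G.neighborSet x).ncard ≤ (S ∩ G.neighborSet z).ncard)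
    (hzu : ¬ G.Adj u z) : ∃ t ∈ S \ (closedNbhd G u ∪ closedNbhd G x), G.Adj z t := by
  by_contra! h
  have hsub : S ∩ G.neighborSet z ⊆ (S ∩ G.neighborSet x) \ {u} := by
    rintro w ⟨hwS, hzw⟩
    have hwu : w ≠ u := by rintro rfl; exact hzu hzw.symm
    have huw : ¬ G.Adj u w := hS hu hwS hwu.symm
    refine ⟨⟨hwS, ?_⟩, hwu⟩
    by_contra hxw
    refine h w ⟨hwS, ?_⟩ hzw
    simp only [Set.mem_union, mem_closedNbhd, not_or]
    exact ⟨⟨hwu, huw⟩, by rintro rfl; exact huw hux, hxw⟩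
  have := (Set.ncard_le_ncard hsub).trans_lt (Set.ncard_sdiff_singleton_lt_of_mem ⟨hu, hux.symm⟩)
  omega

lemma IsMaxIndepIn.diff_closedNbhd (hS : IsMaxIndepIn G W S)
    (hkey : ∀ z ∈ W, z ∉ S → ¬ G.Adj u z →
      ∃ t ∈ S \ (closedNbhd G u ∪ closedNbhd G x), G.Adj z t) :
    IsMaxIndepIn G (W \ (closedNbhd G u ∪ closedNbhd G x))
      (S \ (closedNbhd G u ∪ closedNbhd G x)) :=
  ⟨Set.sdiff_subset_sdiff_left hS.1, Set.Pairwise.mono Set.sdiff_subset hS.2.1,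
    fun v hv hvT => hkey v hv.1 (fun hvS => hvT ⟨hvS, hv.2⟩) fun huv => hv.2 (.inl (.inr huv))⟩

lemma IsMaxIndepIn.recover_diff_closedNbhd (hS : IsMaxIndepIn G W S)
    (hkey : ∀ z ∈ W, z ∉ S → ¬ G.Adj u z →
      ∃ t ∈ S \ (closedNbhd G u ∪ closedNbhd G x), G.Adj z t) (hu : u ∈ S)
    (hux : G.Adj u x) : recover G W u x (S \ (closedNbhd G u ∪ closedNbhd G x)) = S := by
  have hindep := hS.2.1
  refine Set.Subset.antisymm ?_ fun y hyS => ?_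
  · rintro y (rfl | hyT | ⟨hyW, -, huy, hyT⟩)
    · exact hu
    · exact hyT.1
    · by_contra hyS
      obtain ⟨t, ht, hyt⟩ := hkey y hyW hyS huy
      exact hyT t ht hyt.symm
  by_cases hyR : y ∈ closedNbhd G u ∪ closedNbhd G x
  swap
  · exact .inr (.inl ⟨hyS, hyR⟩)
  by_cases hyu : y = u
  · exact .inl hyu
  have huy : ¬ G.Adj u y := hindep hu hyS (Ne.symm hyu)
  have hxy : G.Adj x y := by
    simp only [Set.mem_union, mem_closedNbhd] at hyR
    rcases hyR with (h | h) | (rfl | h)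
    exacts [absurd h hyu, absurd h huy, absurd hux huy, h]
  exact .inr (.inr ⟨hS.1 hyS, hxy, huy,
    fun t ht => hindep ht.1 hyS (by rintro rfl; exact ht.2 hyR)⟩)

lemma IsMaxIndepIn.exists_encoding [Finite V] (hS : IsMaxIndepIn G W S) (hWS : ¬ W ⊆ S) :
    ∃ u ∈ W, ∃ x ∈ W, G.Adj u x ∧
      IsMaxIndepIn G (W \ (closedNbhd G u ∪ closedNbhd G x))
        (S \ (closedNbhd G u ∪ closedNbhd G x)) ∧
      recover G W u x (S \ (closedNbhd G u ∪ closedNbhd G x)) = S := by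
  obtain ⟨x, ⟨hxW, hxS⟩, hxmin⟩ := Set.exists_min_image (W \ S)
    (fun y => (S ∩ G.neighborSet y).ncard) (Set.toFinite _) (Set.sdiff_nonempty.2 hWS)
  obtain ⟨u, huS, hxu⟩ := hS.2.2 x hxW hxS
  have hkey : ∀ z ∈ W, z ∉ S → ¬ G.Adj u z →
      ∃ t ∈ S \ (closedNbhd G u ∪ closedNbhd G x), G.Adj z t := fun z hzW hzS =>
    exists_adj_diff_closedNbhd hS.2.1 huS hxu.symm (hxmin z ⟨hzW, hzS⟩)
  exact ⟨u, hS.1 huS, x, hxW, hxu.symm, hS.diff_closedNbhd hkey,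
    hS.recover_diff_closedNbhd hkey huS hxu.symm⟩

end

lemma _root_.Set.ncard_le_mul_of_subset_biUnion {ι α : Type*} [Finite α] {A : Set α} {P : Set ι}
    (hP : P.Finite) {F : ι → Set α} {b : ℕ} (hA : A ⊆ ⋃ p ∈ P, F p)
    (hF : ∀ p ∈ P, (F p).ncard ≤ b) : A.ncard ≤ P.ncard * b :=
  calc A.ncard ≤ (⋃ p ∈ hP.toFinset, F p).ncard := Set.ncard_le_ncard (by simpa using hA)
    _ ≤ ∑ p ∈ hP.toFinset, (F p).ncard := Finset.set_ncard_biUnion_le _ _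
    _ ≤ hP.toFinset.card * b := Finset.sum_le_card_nsmul _ _ _ (by simpa using hF)
    _ = P.ncard * b := by rw [Set.ncard_eq_toFinset_card P hP]

theorem ncard_setOf_isMaxIndepIn_le [Finite V] {G : SimpleGraph V} (k : ℕ) {W : Set V}
    (hW : ∀ e : sP2 (k + 1) ↪g G, ¬ Set.range e ⊆ W) :
    {S | IsMaxIndepIn G W S}.ncard ≤ max 1 (W.ncard ^ (2 * k)) := by
  induction k generalizing W with
  | zero =>
    have hedgeless : ∀ a ∈ W, ∀ b ∈ W, ¬ G.Adj a b := fun a ha b hb hab =>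
      not_range_subset_diff_closedNbhd hW ha hb hab IsIndContained.of_isEmpty.some
        (Set.range_subset_iff.2 isEmptyElim)
    simp [setOf_isMaxIndepIn_eq_singleton hedgeless]
  | succ k ih =>
    by_cases hedge : ∃ a ∈ W, ∃ b ∈ W, G.Adj a b
    swap
    · push Not at hedge
      simp [setOf_isMaxIndepIn_eq_singleton hedge]
    obtain ⟨a, ha, b, hb, hab⟩ := hedge
    have hW1 : 1 ≤ W.ncard := (Set.ncard_pos).2 ⟨a, ha⟩
    let E := {p : V × V | p.1 ∈ W ∧ p.2 ∈ W ∧ G.Adj p.1 p.2}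
    have hcover : {S | IsMaxIndepIn G W S} ⊆ ⋃ p ∈ E, recover G W p.1 p.2 ''
        {T | IsMaxIndepIn G (W \ (closedNbhd G p.1 ∪ closedNbhd G p.2)) T} := by
      intro S hS
      obtain ⟨u, hu, x, hx, hux, hT, hrec⟩ :=
        hS.exists_encoding fun hWS => hS.2.1 (hWS ha) (hWS hb) hab.ne hab
      exact Set.mem_biUnion (x := (u, x)) ⟨hu, hx, hux⟩ ⟨_, hT, hrec⟩
    have hE : E.ncard ≤ W.ncard ^ 2 :=
      calc E.ncard ≤ (W ×ˢ W).ncard := Set.ncard_le_ncard fun p hp => ⟨hp.1, hp.2.1⟩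
        _ = W.ncard ^ 2 := by rw [Set.ncard_prod, sq]
    calc _ ≤ E.ncard * W.ncard ^ (2 * k) :=
          Set.ncard_le_mul_of_subset_biUnion (Set.toFinite E) hcover fun p ⟨hu, hx, hux⟩ =>
            (Set.ncard_image_le (Set.toFinite _)).trans <|
              (ih (not_range_subset_diff_closedNbhd hW hu hx hux)).trans <|
                max_le (Nat.one_le_pow _ _ hW1)
                  (Nat.pow_le_pow_left (Set.ncard_le_ncard Set.sdiff_subset) _)
      _ ≤ W.ncard ^ 2 * W.ncard ^ (2 * k) := Nat.mul_le_mul_right _ hE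
      _ = W.ncard ^ (2 * (k + 1)) := by ring
      _ ≤ _ := le_max_right _ _

theorem balas_yu_bound_general {V : Type*} [Fintype V] (G : SimpleGraph V) (s : ℕ)
    (hfree : sP2Free s G) :
    {S : Set V | IsMaxIndep G S}.ncard ≤ Fintype.card V ^ (2 * s) + 1 := by
  have hfree' := hfree.not_isIndContained
  cases s with
  | zero => exact absurd IsIndContained.of_isEmpty hfree'
  | succ k =>
    have hbound := ncard_setOf_isMaxIndepIn_le k (W := Set.univ) fun e _ => hfree' ⟨e⟩
    simp only [← isMaxIndep_iff_isMaxIndepIn_univ, Set.ncard_univ, Nat.card_eq_fintype_card]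
      at hbound
    refine hbound.trans (max_le (by omega) ?_)
    rcases Nat.eq_zero_or_pos (Fintype.card V) with h | h
    · rw [h]
      exact (zero_pow_le_one _).trans (Nat.le_add_left _ _)
    · exact (Nat.pow_le_pow_right h (by omega)).trans (Nat.le_succ _)

/-- For every `s ≥ 1`, an `sP₂`-free graph on `n` vertices has at most
`n ^ (2 * s) + 1` maximal independent sets. -/
theorem balas_yu_bound {V : Type*} [Fintype V] (G : SimpleGraph V) (s : ℕ) (hs : 1 ≤ s)
    (hfree : sP2Free s G) :
    {S : Set V | IsMaxIndep G S}.ncard ≤ Fintype.card V ^ (2 * s) + 1 :=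
  balas_yu_bound_general G s hfree
end Paper
end

section
/- Let G be an sP_2-free graph and let S be a minimal feedback vertex set of G with F = G - S the resulting induced forest. Let F' be a skeleton of F: the set of all vertices of degree at least 2 in F together with one arbitrarily chosen vertex from each component of F isomorphic to P_2. Then |V(F')| ≤ 3s² - 5s + 2. -/
open SimpleGraph

namespace Paper

variable {V : Type*}

/-!
Every vertex of a skeleton of the forest `F = G - S` has degree at least two in `F` or lies in a
`P₂`-component of `F`. Root a component of `F` at an edge and take a deepest vertex `v₀`, its parent
`v₁`, the parent `p` of `v₁` and the parent `q` of `p`; all children of `v₁` are leaves. Put `v₀v₁`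
into an induced matching and delete the closed neighbourhood of `v₁`. No remaining vertex sees
`v₀` or `v₁`, and among the candidates for a skeleton only `v₀, v₁, p, q` can be lost: a child of
`p` of degree two becomes a `P₂` together with its leaf child. By induction a skeleton has at most
`4n` vertices, where `n` is the size of an induced matching `nP₂` of `G`, and `sP₂`-freeness gives
`n ≤ s - 1`, so `|F'| ≤ 4(s - 1) ≤ (3s - 2)(s - 1) = 3s² - 5s + 2`.
-/

section Forest

variable {H : SimpleGraph V} {u x y y' : V}

theorem _root_.SimpleGraph.Reachable.exists_adj_dist_add_one (hr : H.Reachable u x)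
    (hx : u ≠ x) : ∃ y, H.Adj x y ∧ H.dist u y + 1 = H.dist u x := by
  obtain ⟨p, hp⟩ := hr.exists_walk_length_eq_dist
  cases hq : p.reverse with
  | nil => exact absurd rfl hx
  | @cons _ y _ hxy q =>
    have hlen := congrArg Walk.length hq
    simp only [Walk.length_reverse, Walk.length_cons] at hlen
    have := dist_comm (G := H) ▸ dist_le q
    have := hxy.diff_dist_adj (u := u)
    exact ⟨y, hxy, by omega⟩

theorem _root_.SimpleGraph.IsAcyclic.eq_penultimate_of_dist_lt (hH : H.IsAcyclic)
    {p : H.Walk u x} (hp : p.IsPath) (hy : H.Adj x y) (hd : H.dist u y < H.dist u x) :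
    y = p.penultimate := by
  classical
  obtain ⟨q, hq, hql⟩ := (p.reachable.trans hy.reachable).exists_path_of_dist
  refine hH.eq_penultimate_of_adj_end hp hy
    (hH.mem_support_of_ne_mem_support_of_adj_of_isPath hp hq hy fun hx => ?_)
  have := (dist_le (q.takeUntil x hx)).trans (q.length_takeUntil_le_length hx)
  omega

theorem _root_.SimpleGraph.IsAcyclic.eq_of_dist_lt (hH : H.IsAcyclic) (hr : H.Reachable u x)
    (hy : H.Adj x y) (hy' : H.Adj x y') (hd : H.dist u y < H.dist u x)
    (hd' : H.dist u y' < H.dist u x) : y = y' := by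
  obtain ⟨p, hp, -⟩ := hr.exists_path_of_dist
  rw [hH.eq_penultimate_of_dist_lt hp hy hd, hH.eq_penultimate_of_dist_lt hp hy' hd']

/- Root the component of an edge at `u` and let `v₀` be a deepest vertex, `v₁` its parent, `p`
the parent of `v₁` (or `v₁` itself if it is the root) and `q` the parent of `p`. -/
theorem _root_.SimpleGraph.IsAcyclic.exists_adj_pendant [Finite V] (hH : H.IsAcyclic) {w : V}
    (huw : H.Adj u w) :
    ∃ v₀ v₁ p q, H.Adj v₀ v₁ ∧ v₀ ≠ p ∧
      (∀ w, H.Adj v₁ w → w ≠ p → ∀ z, H.Adj w z → z = v₁) ∧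
      (∀ w, H.Adj p w → w ≠ v₁ → w ≠ q → ∀ z, H.Adj w z → z ≠ p → ∀ y, H.Adj z y → y = w) := by
  obtain ⟨v₀, hv₀ : H.Reachable u v₀, hmax⟩ :=
    Set.exists_max_image {x | H.Reachable u x} (H.dist u) (Set.toFinite _) ⟨u, .rfl⟩
  have hdeep : ∀ z, H.Reachable u z → H.dist u z = H.dist u v₀ →
      ∀ y y', H.Adj z y → H.Adj z y' → H.dist u y' < H.dist u z → y = y' := by
    intro z hz hdz y y' hy hy' hdy'
    have := hmax y (hz.trans hy.reachable)
    have := hH.dist_eq_dist_add_one_of_adj_of_reachable u hy hz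
    exact hH.eq_of_dist_lt hz hy hy' (by omega) hdy'
  have hu₀ : u ≠ v₀ := by
    rintro rfl
    have := hmax w huw.reachable
    have := huw.reachable.pos_dist_of_ne huw.ne
    simp only [dist_self] at *
    omega
  obtain ⟨v₁, h01, hd₁⟩ := hv₀.exists_adj_dist_add_one hu₀
  have hv₁ : H.Reachable u v₁ := hv₀.trans h01.reachable
  by_cases hu₁ : u = v₁
  · subst hu₁
    rw [dist_self, zero_add] at hd₁
    have hchildren : ∀ w, H.Adj u w → w ≠ u → ∀ z, H.Adj w z → z = u := by
      intro w hw _ z hz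
      have hdw : H.dist u w = 1 := dist_eq_one_iff_adj.mpr hw
      exact hdeep w hw.reachable (by omega) z u hz hw.symm (by simp [hdw])
    exact ⟨v₀, u, u, u, h01, h01.ne, hchildren,
      fun w hw hwu _ z hz hzu _ _ => absurd (hchildren w hw hwu z hz) hzu⟩
  obtain ⟨p, h1p, hdp⟩ := hv₁.exists_adj_dist_add_one hu₁
  have hp : H.Reachable u p := hv₁.trans h1p.reachable
  obtain ⟨q, hq⟩ : ∃ q, u ≠ p → H.Adj p q ∧ H.dist u q + 1 = H.dist u p := by
    by_cases hup : u = p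
    · exact ⟨p, fun h => absurd hup h⟩
    · obtain ⟨q, hq⟩ := hp.exists_adj_dist_add_one hup
      exact ⟨q, fun _ => hq⟩
  refine ⟨v₀, v₁, p, q, h01, by rintro rfl; omega, ?_, ?_⟩
  · intro w hw hwp z hz
    rcases hH.dist_eq_dist_add_one_of_adj_of_reachable u hw hv₁ with h | h
    · exact absurd (hH.eq_of_dist_lt hv₁ hw h1p (by omega) (by omega)) hwp
    · exact hdeep w (hv₁.trans hw.reachable) (by omega) z v₁ hz hw.symm (by omega)
  · intro w hw hwv₁ hwq z hz hzp y hy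
    have hw' : H.Reachable u w := hp.trans hw.reachable
    rcases hH.dist_eq_dist_add_one_of_adj_of_reachable u hw hp with h | h
    · have hup : u ≠ p := by rintro rfl; simp at h
      have hqp := hq hup
      exact absurd (hH.eq_of_dist_lt hp hw hqp.1 (by omega) (by omega)) hwq
    rcases hH.dist_eq_dist_add_one_of_adj_of_reachable u hz hw' with h' | h'
    · exact absurd (hH.eq_of_dist_lt hw' hz hw.symm (by omega) (by omega)) hzp
    · exact hdeep z (hw'.trans hz.reachable) (by omega) y w hy hz.symm (by omega)

end Forest

section InducedMatching

variable {G : SimpleGraph V} {n : ℕ}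

lemma sP2_adj {a b : Fin n × Fin 2} : (sP2 n).Adj a b ↔ a.1 = b.1 ∧ a.2 ≠ b.2 := Iff.rfl

def sP2.embeddingOfAdjIff (g : Fin n × Fin 2 → V)
    (hg : ∀ a b, G.Adj (g a) (g b) ↔ (sP2 n).Adj a b) : sP2 n ↪g G where
  toFun := g
  inj' a b hab := by
    have hflip : ∀ j : Fin 2, j ≠ j + 1 := by decide
    have hb := (hg b (a.1, a.2 + 1)).1 (hab ▸ (hg a _).2 ⟨rfl, hflip a.2⟩)
    have h2 : ∀ i j : Fin 2, i ≠ j + 1 → i = j := by decide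
    exact Prod.ext hb.1.symm (h2 _ _ hb.2).symm
  map_rel_iff' := hg _ _

lemma exists_sP2_succ_embedding_s7 (f : sP2 n ↪g G) {x y : V} (hxy : G.Adj x y)
    (hx : ∀ a, f a ≠ x ∧ ¬ G.Adj (f a) x) (hy : ∀ a, f a ≠ y ∧ ¬ G.Adj (f a) y) :
    ∃ g : sP2 (n + 1) ↪g G, Set.range g ⊆ insert x (insert y (Set.range f)) := by
  let g : Fin (n + 1) × Fin 2 → V := fun a => Fin.lastCases (![x, y] a.2) (fun i => f (i, a.2)) a.1
  have hnew : ∀ a j, ¬ G.Adj (f a) (![x, y] j) := by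
    intro a j
    fin_cases j
    exacts [(hx a).2, (hy a).2]
  refine ⟨sP2.embeddingOfAdjIff g ?_, ?_⟩
  · rintro ⟨i, j⟩ ⟨i', j'⟩
    induction i using Fin.lastCases <;> induction i' using Fin.lastCases <;>
      simp only [g, sP2_adj, Fin.lastCases_last, Fin.lastCases_castSucc, f.map_adj_iff]
    · fin_cases j <;> fin_cases j' <;> simp [hxy, hxy.symm]
    · rw [G.adj_comm]
      simp [hnew, (Fin.castSucc_lt_last _).ne']
    · simp [hnew, (Fin.castSucc_lt_last _).ne]
    · simp
  · rintro _ ⟨⟨i, j⟩, rfl⟩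
    change g (i, j) ∈ _
    induction i using Fin.lastCases
    · fin_cases j <;> simp [g]
    · simp [g]

lemma sP2Free.lt_of_embedding {s : ℕ} (hfree : sP2Free s G) (f : sP2 n ↪g G) : n < s := by
  by_contra! hsn
  let e : sP2 s ↪g sP2 n := sP2.embeddingOfAdjIff (fun a => (Fin.castLE hsn a.1, a.2)) <| by
    simp [sP2_adj, Fin.castLE_inj]
  exact hfree ⟨_, ⟨(f.comp e).isoInduceRange.symm⟩⟩

end InducedMatching

section Skeleton

variable {G : SimpleGraph V} {F R : Set V} {v p x y z : V}

def skeletonCandidates (G : SimpleGraph V) (F : Set V) : Set V :=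
  {v ∈ F | 2 ≤ degIn G F v ∨ ∃ y, IsP2Comp G F v y}

lemma IsSkeleton.subset_skeletonCandidates {F' : Set V} (h : IsSkeleton G F F') :
    F' ⊆ skeletonCandidates G F :=
  fun v hv => ⟨h.1 hv, h.2.2.1 v hv⟩

lemma IsP2Comp.of_subset (h : IsP2Comp G F x y) (hRF : R ⊆ F) (hx : x ∈ R) (hy : y ∈ R) :
    IsP2Comp G R x y :=
  ⟨hx, hy, h.2.2.1, fun w hw => h.2.2.2.1 w (hRF hw), fun w hw => h.2.2.2.2 w (hRF hw)⟩

lemma exists_adj_of_mem_skeletonCandidates (hv : v ∈ skeletonCandidates G F) :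
    ∃ w ∈ F, G.Adj v w := by
  obtain ⟨-, hdeg | ⟨y, hy⟩⟩ := hv
  · unfold degIn at hdeg
    exact Set.nonempty_of_ncard_ne_zero (s := {w | w ∈ F ∧ G.Adj v w}) (by omega)
  · exact ⟨y, hy.2.1, hy.2.2.1⟩

lemma eq_of_mem_skeletonCandidates_of_forall_adj_eq (hv : v ∈ skeletonCandidates G F)
    (hx : ∀ w ∈ F, G.Adj v w → w = x) (hzF : z ∈ F) (hxz : G.Adj x z) : z = v := by
  obtain ⟨-, hdeg | ⟨y, hy⟩⟩ := hv
  · have := Set.ncard_le_ncard (s := {w | w ∈ F ∧ G.Adj v w}) (t := {x})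
      fun w hw => hx w hw.1 hw.2
    unfold degIn at hdeg
    simp only [Set.ncard_singleton] at this
    omega
  · obtain rfl := hx y hy.2.1 hy.2.2.1
    exact hy.2.2.2.2 z hzF hxz

lemma mem_skeletonCandidates_diff (hv : v ∈ skeletonCandidates G F) (hvR : v ∉ R)
    (hR : ∀ w ∈ F, G.Adj v w → w ∉ R) : v ∈ skeletonCandidates G (F \ R) := by
  have hN : {w | w ∈ F \ R ∧ G.Adj v w} = {w | w ∈ F ∧ G.Adj v w} := by
    ext w
    simp only [Set.mem_ofPred_eq, Set.mem_sdiff]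
    exact ⟨fun h => ⟨h.1.1, h.2⟩, fun h => ⟨⟨h.1, hR w h.1 h.2⟩, h.2⟩⟩
  obtain ⟨hvF, hdeg | ⟨y, hy⟩⟩ := hv
  · exact ⟨⟨hvF, hvR⟩, .inl (by rwa [degIn, hN])⟩
  · exact ⟨⟨hvF, hvR⟩, .inr ⟨y, hy.of_subset Set.sdiff_subset ⟨hvF, hvR⟩
      ⟨hy.2.1, hR y hy.2.1 hy.2.2.1⟩⟩⟩

/- The degree of `v` drops by one; if it drops to one, `v` and its remaining neighbour form a
`P₂` by `hleaf`. -/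
lemma mem_skeletonCandidates_diff_of_pendant [Finite V] (hv : v ∈ skeletonCandidates G F)
    (hvR : v ∉ R) (hpF : p ∈ F) (hvp : G.Adj v p) (hpR : p ∈ R)
    (hR : ∀ w ∈ F, G.Adj v w → w ∈ R → w = p) (hzF : z ∈ F) (hpz : G.Adj p z) (hzv : z ≠ v)
    (hleaf : ∀ g ∈ F, G.Adj v g → g ≠ p → ∀ y ∈ F, G.Adj g y → y = v) :
    v ∈ skeletonCandidates G (F \ R) := by
  obtain ⟨hvF, hdeg | ⟨y, hy⟩⟩ := hv
  swap
  · obtain rfl := hy.2.2.2.1 p hpF hvp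
    exact absurd (hy.2.2.2.2 z hzF hpz) hzv
  have hN : {w | w ∈ F \ R ∧ G.Adj v w} = {w | w ∈ F ∧ G.Adj v w} \ {p} := by
    ext w
    simp only [Set.mem_ofPred_eq, Set.mem_sdiff, Set.mem_singleton_iff]
    exact ⟨fun h => ⟨⟨h.1.1, h.2⟩, fun hwp => h.1.2 (hwp ▸ hpR)⟩,
      fun h => ⟨⟨h.1.1, fun hwR => h.2 (hR w h.1.1 h.1.2 hwR)⟩, h.1.2⟩⟩
  have hcard : degIn G (F \ R) v + 1 = degIn G F v := by
    rw [degIn, hN]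
    exact Set.ncard_sdiff_singleton_add_one ⟨hpF, hvp⟩
  refine ⟨⟨hvF, hvR⟩, ?_⟩
  rcases Nat.lt_or_ge 2 (degIn G F v) with h3 | h2
  · exact .inl (by omega)
  obtain ⟨g, hg⟩ := Set.ncard_eq_one.mp (show degIn G (F \ R) v = 1 by omega)
  have hgN : g ∈ {w | w ∈ F \ R ∧ G.Adj v w} := hg ▸ rfl
  refine .inr ⟨g, ⟨hvF, hvR⟩, hgN.1, hgN.2, fun w hw hvw => ?_, fun w hw hgw => ?_⟩
  · exact (hg ▸ (⟨hw, hvw⟩ : w ∈ {w | w ∈ F \ R ∧ G.Adj v w}) : w ∈ ({g} : Set V))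
  · exact hleaf g hgN.1.1 hgN.2 (fun hgp => hgN.1.2 (hgp ▸ hpR)) w hw.1 hgw

lemma skeletonCandidates_subset_diff [Finite V] {v₀ v₁ q : V} (h0F : v₀ ∈ F) (h1F : v₁ ∈ F)
    (h01 : G.Adj v₀ v₁) (h0p : v₀ ≠ p)
    (hchildren : ∀ w ∈ F, G.Adj v₁ w → w ≠ p → ∀ z ∈ F, G.Adj w z → z = v₁)
    (hgrandchildren : ∀ w ∈ F, G.Adj p w → w ≠ v₁ → w ≠ q → ∀ z ∈ F, G.Adj w z → z ≠ p →
      ∀ y ∈ F, G.Adj z y → y = w) :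
    skeletonCandidates G F ⊆
      skeletonCandidates G (F \ insert v₁ (G.neighborSet v₁)) ∪ {v₀, v₁, p, q} := by
  intro v hv
  refine or_iff_not_imp_right.2 fun hv₄ => ?_
  simp only [Set.mem_insert_iff, Set.mem_singleton_iff, not_or] at hv₄
  obtain ⟨hv₀, hv₁, hvp, hvq⟩ := hv₄
  have hvF : v ∈ F := hv.1
  have hvR : v ∉ insert v₁ (G.neighborSet v₁) := by
    rintro (rfl | h1v)
    · exact hv₁ rfl
    · exact hv₀ (eq_of_mem_skeletonCandidates_of_forall_adj_eq hv (hchildren v hvF h1v hvp) h0F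
        h01.symm).symm
  have hRp : ∀ w ∈ F, G.Adj v w → w ∈ insert v₁ (G.neighborSet v₁) → w = p ∧ G.Adj v₁ p := by
    rintro w hwF hvw (rfl | h1w)
    · exact absurd (Or.inr hvw.symm) hvR
    · by_cases hwp : w = p
      · exact ⟨hwp, hwp ▸ h1w⟩
      · exact absurd (hchildren w hwF h1w hwp v hvF hvw.symm) hv₁
  by_cases hp : p ∈ F ∧ G.Adj v p ∧ G.Adj v₁ p
  · obtain ⟨hpF, hvp', h1p⟩ := hp
    exact mem_skeletonCandidates_diff_of_pendant hv hvR hpF hvp' (Or.inr h1p)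
      (fun w hwF hvw hwR => (hRp w hwF hvw hwR).1) h1F h1p.symm (Ne.symm hv₁)
      (hgrandchildren v hvF hvp'.symm hv₁ hvq)
  · refine mem_skeletonCandidates_diff hv hvR fun w hwF hvw hwR => hp ?_
    obtain ⟨rfl, h1p⟩ := hRp w hwF hvw hwR
    exact ⟨hwF, hvw, h1p⟩

lemma exists_adj_pendant_of_isAcyclic_induce [Finite V] (hF : (G.induce F).IsAcyclic) {u w : V}
    (hu : u ∈ F) (hw : w ∈ F) (huw : G.Adj u w) :
    ∃ v₀ ∈ F, ∃ v₁ ∈ F, ∃ p q, G.Adj v₀ v₁ ∧ v₀ ≠ p ∧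
      (∀ w ∈ F, G.Adj v₁ w → w ≠ p → ∀ z ∈ F, G.Adj w z → z = v₁) ∧
      (∀ w ∈ F, G.Adj p w → w ≠ v₁ → w ≠ q → ∀ z ∈ F, G.Adj w z → z ≠ p →
        ∀ y ∈ F, G.Adj z y → y = w) := by
  obtain ⟨⟨v₀, h0⟩, ⟨v₁, h1⟩, ⟨p, _⟩, ⟨q, _⟩, h01, h0p, hchildren, hgrandchildren⟩ :=
    hF.exists_adj_pendant (show (G.induce F).Adj ⟨u, hu⟩ ⟨w, hw⟩ from huw)
  refine ⟨v₀, h0, v₁, h1, p, q, h01, fun h => h0p (Subtype.ext h), ?_, ?_⟩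
  · simpa [Subtype.forall, Subtype.ext_iff] using hchildren
  · simpa [Subtype.forall, Subtype.ext_iff] using hgrandchildren

lemma ncard_le_four (a b c d : V) : ({a, b, c, d} : Set V).ncard ≤ 4 := by
  refine (Set.ncard_insert_le _ _).trans (Nat.succ_le_succ ?_)
  refine (Set.ncard_insert_le _ _).trans (Nat.succ_le_succ ?_)
  exact (Set.ncard_insert_le _ _).trans (by simp)

theorem exists_sP2_embedding_four_mul_le [Finite V] (F : Set V) (hF : (G.induce F).IsAcyclic) :
    ∃ n, ∃ f : sP2 n ↪g G, Set.range f ⊆ F ∧ (skeletonCandidates G F).ncard ≤ 4 * n := by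
  induction F using WellFoundedLT.induction with | _ F ih => ?_
  rcases (skeletonCandidates G F).eq_empty_or_nonempty with hempty | ⟨u, hu⟩
  · refine ⟨0, sP2.embeddingOfAdjIff (fun a => a.1.elim0) (fun a => a.1.elim0), ?_, ?_⟩
    · rintro _ ⟨a, -⟩
      exact a.1.elim0
    · simp [hempty]
  obtain ⟨w, hwF, huw⟩ := exists_adj_of_mem_skeletonCandidates hu
  obtain ⟨v₀, h0F, v₁, h1F, p, q, h01, h0p, hchildren, hgrandchildren⟩ :=
    exists_adj_pendant_of_isAcyclic_induce hF hu.1 hwF huw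
  set R := insert v₁ (G.neighborSet v₁)
  have hlt : F \ R < F := Set.sdiff_ssubset_left_iff.mpr ⟨v₁, h1F, .inl rfl⟩
  obtain ⟨n, f, hfF, hcard⟩ := ih (F \ R) hlt (hF.embedding (G.induceHomOfLE Set.sdiff_subset))
  have hfR : ∀ a, f a ∉ R := fun a => (hfF ⟨a, rfl⟩).2
  obtain ⟨g, hg⟩ := exists_sP2_succ_embedding_s7 f h01
    (fun a => ⟨fun h => hfR a (h ▸ .inr h01.symm),
      fun h => hfR a (.inl (hchildren v₀ h0F h01.symm h0p _ (hfF ⟨a, rfl⟩).1 h.symm))⟩)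
    (fun a => ⟨fun h => hfR a (h ▸ .inl rfl), fun h => hfR a (.inr h.symm)⟩)
  refine ⟨n + 1, g, hg.trans ?_, ?_⟩
  · rintro _ (rfl | rfl | ⟨a, rfl⟩)
    exacts [h0F, h1F, (hfF ⟨a, rfl⟩).1]
  calc (skeletonCandidates G F).ncard
      ≤ (skeletonCandidates G (F \ R) ∪ {v₀, v₁, p, q}).ncard :=
        Set.ncard_le_ncard (skeletonCandidates_subset_diff h0F h1F h01 h0p hchildren hgrandchildren)
    _ ≤ (skeletonCandidates G (F \ R)).ncard + 4 :=
        (Set.ncard_union_le _ _).trans (Nat.add_le_add_left (ncard_le_four _ _ _ _) _)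
    _ ≤ 4 * (n + 1) := by omega

end Skeleton

lemma four_mul_le_of_lt {n s : ℕ} (h : n < s) : 4 * n ≤ 3 * s ^ 2 + 2 - 5 * s := by
  obtain ⟨t, rfl⟩ : ∃ t, s = t + 1 := ⟨s - 1, by omega⟩
  have hsq : 3 * (t + 1) ^ 2 = 3 * t ^ 2 + 6 * t + 3 := by ring
  have ht : t ≤ t ^ 2 := Nat.le_self_pow two_ne_zero t
  omega

theorem skeleton_size_bound_general {V : Type*} [Fintype V] (G : SimpleGraph V) (s : ℕ)
    (hfree : sP2Free s G) (S : Set V) (hS : IsMinFVS G S)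
    (F' : Set V) (hF' : IsSkeleton G (Sᶜ : Set V) F') :
    F'.ncard ≤ 3 * s ^ 2 + 2 - 5 * s := by
  obtain ⟨n, f, -, hn⟩ := exists_sP2_embedding_four_mul_le (Sᶜ : Set V) hS.1
  calc F'.ncard ≤ (skeletonCandidates G Sᶜ).ncard :=
        Set.ncard_le_ncard hF'.subset_skeletonCandidates
    _ ≤ 4 * n := hn
    _ ≤ 3 * s ^ 2 + 2 - 5 * s := four_mul_le_of_lt (hfree.lt_of_embedding f)

/-- If `S` is a minimal feedback vertex set of an `sP₂`-free graph `G` and `F'` is a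
skeleton of the forest `F = G - S`, then `|F'| ≤ 3s² - 5s + 2`. -/
theorem skeleton_size_bound {V : Type*} [Fintype V] (G : SimpleGraph V) (s : ℕ) (hs : 1 ≤ s)
    (hfree : sP2Free s G) (S : Set V) (hS : IsMinFVS G S)
    (F' : Set V) (hF' : IsSkeleton G (Sᶜ : Set V) F') :
    F'.ncard ≤ 3 * s ^ 2 + 2 - 5 * s :=
  skeleton_size_bound_general G s hfree S hS F' hF'
end Paper
end

section
/- Let G be a graph and let G' be obtained from G by adding, for each edge uv of G, a new path of even length 2⌊p/2⌋ between u and v (with new internal vertices), keeping the original edge uv. Then for every k, G has a connected vertex cover of size at most k if and only if G' has a connected odd cycle transversal of size at most k. -/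
open SimpleGraph

namespace Paper

variable {V : Type*}

/-- The graph obtained from `G` by adding, for each edge `e` of `G` (with endpoints given by the
orientation `o`), a new path with `q` edges (through `q - 1` new internal vertices) between its
endpoints, keeping all original edges of `G`. -/
def addPaths (G : SimpleGraph V) (q : ℕ) (o : G.edgeSet → V × V) :
    SimpleGraph (V ⊕ (G.edgeSet × Fin (q - 1))) :=
  SimpleGraph.fromRel fun x y =>
    (∃ a b : V, x = Sum.inl a ∧ y = Sum.inl b ∧ G.Adj a b) ∨
    (∃ (e : G.edgeSet) (i : Fin (q - 1)),
      x = Sum.inl (o e).1 ∧ y = Sum.inr (e, i) ∧ (i : ℕ) = 0) ∨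
    (∃ (e : G.edgeSet) (i j : Fin (q - 1)),
      x = Sum.inr (e, i) ∧ y = Sum.inr (e, j) ∧ (j : ℕ) = (i : ℕ) + 1) ∨
    (∃ (e : G.edgeSet) (i : Fin (q - 1)),
      x = Sum.inr (e, i) ∧ y = Sum.inl (o e).2 ∧ (i : ℕ) = q - 2)
/-! A connected vertex cover `S` of `G` is a connected odd cycle transversal of `G'`: colour
every vertex of `G` with `0` and the `i`-th internal vertex of each added path with `i + 1`
(mod 2); because the paths are even, this 2-colours `G' - S`. Conversely, collapsing every added
path onto the first endpoint of its edge maps a connected odd cycle transversal `S'` of `G'` onto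
a connected vertex cover of `G` of size at most `|S'|`: an edge of `G` with neither endpoint in
`S'` closes its added path to an odd cycle, which `S'` must meet inside the path. -/

open Sum

theorem zmod_two_eq_add_one_of_ne {a b : ZMod 2} (h : a ≠ b) : b = a + 1 := by
  revert a b
  decide

theorem zmod_two_eq_add_of_forall_ne_succ {g : ℕ → ZMod 2} {n : ℕ}
    (h : ∀ i < n, g i ≠ g (i + 1)) : g n = g 0 + n := by
  induction n with
  | zero => simp
  | succ n ih =>
    rw [zmod_two_eq_add_one_of_ne (h n n.lt_succ_self), ih fun i hi => h i (by omega)]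
    push_cast
    ring

theorem isOCT_iff_exists_zmod_two {G : SimpleGraph V} {S : Set V} :
    IsOCT G S ↔
      ∃ c : V → ZMod 2, ∀ ⦃x y⦄, x ∉ S → y ∉ S → G.Adj x y → c x ≠ c y := by
  classical
  constructor
  · intro hS
    obtain ⟨C⟩ : Nonempty ((G.induce Sᶜ).Coloring (ZMod 2)) := hS
    refine ⟨fun x => if hx : x ∉ S then C ⟨x, hx⟩ else 0, fun x y hx hy hxy => ?_⟩
    simp only [dif_pos hx, dif_pos hy]
    exact C.valid hxy
  · rintro ⟨c, hc⟩
    exact ⟨Coloring.mk (fun x => c x) fun {x y} hxy => hc x.2 y.2 hxy⟩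

theorem ConnSet.image {W : Type*} {G : SimpleGraph V} {H : SimpleGraph W} {S : Set V}
    (hS : ConnSet G S) (f : V → W)
    (hf : ∀ ⦃x y⦄, x ∈ S → y ∈ S → G.Adj x y → f x = f y ∨ H.Adj (f x) (f y)) :
    ConnSet H (f '' S) := by
  have hS : (G.induce S).Connected := hS
  let g : S → f '' S := fun x => ⟨f x, x.1, x.2, rfl⟩
  have hg : Function.Surjective g := by
    rintro ⟨_, x, hx, rfl⟩
    exact ⟨⟨x, hx⟩, rfl⟩
  have hreach : ∀ x y, (H.induce (f '' S)).Reachable (g x) (g y) := by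
    intro x y
    rw [reachable_iff_reflTransGen]
    refine Relation.ReflTransGen.lift' g (fun a b hab => ?_) x y
      ((reachable_iff_reflTransGen _ _).1 (hS.preconnected x y))
    rw [Function.onFun, ← reachable_iff_reflTransGen]
    rcases hf a.2 b.2 hab with h | h
    · exact (Subtype.ext h : g a = g b) ▸ Reachable.rfl
    · exact Adj.reachable h
  exact (connected_iff _).2 ⟨hg.forall₂.2 hreach, hS.nonempty.map g⟩

section addPaths

variable {G : SimpleGraph V} {q : ℕ} {o : G.edgeSet → V × V}

theorem addPaths_adj_inl {a b : V} (h : G.Adj a b) : (addPaths G q o).Adj (inl a) (inl b) :=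
  ⟨by simpa using h.ne, .inl (.inl ⟨a, b, rfl, rfl, h⟩)⟩

theorem addPaths_adj_start {e : G.edgeSet} {i : Fin (q - 1)} (hi : (i : ℕ) = 0) :
    (addPaths G q o).Adj (inl (o e).1) (inr (e, i)) :=
  ⟨by simp, .inl (.inr (.inl ⟨e, i, rfl, rfl, hi⟩))⟩

theorem addPaths_adj_step {e : G.edgeSet} {i j : Fin (q - 1)} (hj : (j : ℕ) = i + 1) :
    (addPaths G q o).Adj (inr (e, i)) (inr (e, j)) :=
  ⟨by simp [Fin.ext_iff, hj], .inl (.inr (.inr (.inl ⟨e, i, j, rfl, rfl, hj⟩)))⟩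

theorem addPaths_adj_finish {e : G.edgeSet} {i : Fin (q - 1)} (hi : (i : ℕ) = q - 2) :
    (addPaths G q o).Adj (inr (e, i)) (inl (o e).2) :=
  ⟨by simp, .inl (.inr (.inr (.inr ⟨e, i, rfl, rfl, hi⟩)))⟩

theorem addPaths_adj_induction {P : V ⊕ (G.edgeSet × Fin (q - 1)) →
      V ⊕ (G.edgeSet × Fin (q - 1)) → Prop}
    (symm : ∀ ⦃x y⦄, P x y → P y x)
    (inl_inl : ∀ ⦃a b⦄, G.Adj a b → P (inl a) (inl b))
    (start : ∀ e (i : Fin (q - 1)), (i : ℕ) = 0 → P (inl (o e).1) (inr (e, i)))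
    (step : ∀ e (i j : Fin (q - 1)), (j : ℕ) = i + 1 → P (inr (e, i)) (inr (e, j)))
    (finish : ∀ e (i : Fin (q - 1)), (i : ℕ) = q - 2 → P (inr (e, i)) (inl (o e).2))
    {x y : V ⊕ (G.edgeSet × Fin (q - 1))} (h : (addPaths G q o).Adj x y) : P x y := by
  obtain ⟨-, hr | hr⟩ := (fromRel_adj _ _ _).1 h
  on_goal 2 => apply symm
  all_goals
    rcases hr with ⟨a, b, rfl, rfl, hab⟩ | ⟨e, i, rfl, rfl, hi⟩ |
      ⟨e, i, j, rfl, rfl, hj⟩ | ⟨e, i, rfl, rfl, hi⟩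
    exacts [inl_inl hab, start e i hi, step e i j hj, finish e i hi]

theorem addPaths_endpoints_adj
    (ho : ∀ e : G.edgeSet, s((o e).1, (o e).2) = (e : Sym2 V)) (e : G.edgeSet) :
    G.Adj (o e).1 (o e).2 := by
  rw [← mem_edgeSet, ho e]
  exact e.2

def addPathsChain (o : G.edgeSet → V × V) (q : ℕ) (e : G.edgeSet) :
    ℕ → V ⊕ (G.edgeSet × Fin (q - 1))
  | 0 => inl (o e).1
  | i + 1 => if h : i < q - 1 then inr (e, ⟨i, h⟩) else inl (o e).2

theorem addPathsChain_of_ne_zero (hq : q ≠ 0) (e : G.edgeSet) :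
    addPathsChain o q e q = inl (o e).2 := by
  obtain ⟨n, rfl⟩ := Nat.exists_eq_succ_of_ne_zero hq
  simp [addPathsChain]

theorem addPaths_adj_addPathsChain (ho : ∀ e : G.edgeSet, s((o e).1, (o e).2) = (e : Sym2 V))
    (e : G.edgeSet) {i : ℕ} (hi : i < q) :
    (addPaths G q o).Adj (addPathsChain o q e i) (addPathsChain o q e (i + 1)) := by
  rcases i with _ | i
  · by_cases h : 0 < q - 1
    · simpa [addPathsChain, h] using addPaths_adj_start (o := o) (e := e) (i := ⟨0, h⟩) rfl
    · simpa [addPathsChain, h] using addPaths_adj_inl (q := q) (addPaths_endpoints_adj ho e)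
  · have hi' : i < q - 1 := by omega
    by_cases h : i + 1 < q - 1
    · simpa [addPathsChain, hi', h] using
        addPaths_adj_step (e := e) (i := ⟨i, hi'⟩) (j := ⟨i + 1, h⟩) rfl
    · simpa [addPathsChain, hi', h] using
        addPaths_adj_finish (o := o) (e := e) (i := ⟨i, hi'⟩) (by simp; omega)

theorem IsOCT.exists_inr_mem_of_endpoints_not_mem (hq : q ≠ 0) (hqe : Even q)
    (ho : ∀ e : G.edgeSet, s((o e).1, (o e).2) = (e : Sym2 V))
    {S' : Set (V ⊕ (G.edgeSet × Fin (q - 1)))} (hS' : IsOCT (addPaths G q o) S')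
    (e : G.edgeSet) (h1 : inl (o e).1 ∉ S') (h2 : inl (o e).2 ∉ S') :
    ∃ i, inr (e, i) ∈ S' := by
  by_contra! hcon
  obtain ⟨c, hc⟩ := isOCT_iff_exists_zmod_two.1 hS'
  have hout : ∀ i, addPathsChain o q e i ∉ S' := by
    rintro (_ | i)
    · exact h1
    · simp only [addPathsChain]
      split
      exacts [hcon _, h2]
  have hparity := zmod_two_eq_add_of_forall_ne_succ (g := fun i => c (addPathsChain o q e i))
    (n := q) fun i hi => hc (hout i) (hout (i + 1)) (addPaths_adj_addPathsChain ho e hi)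
  rw [hqe.natCast_zmod_two, add_zero, addPathsChain_of_ne_zero hq] at hparity
  exact hc h1 h2 (addPaths_adj_inl (addPaths_endpoints_adj ho e)) hparity.symm

theorem IsVC.isOCT_addPaths_image_inl (hqe : Even q) {S : Set V} (hS : IsVC G S) :
    IsOCT (addPaths G q o) (inl '' S) := by
  let c : V ⊕ (G.edgeSet × Fin (q - 1)) → ZMod 2 :=
    Sum.elim 0 fun x => ((x.2 : ℕ) : ZMod 2) + 1
  refine isOCT_iff_exists_zmod_two.2 ⟨c, fun x y hx hy h => ?_⟩
  refine addPaths_adj_induction (P := fun x y => x ∉ inl '' S → y ∉ inl '' S → c x ≠ c y)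
    (fun x y h hy hx => (h hx hy).symm) (fun a b hab ha hb => ?_) (fun e i hi _ _ => ?_)
    (fun e i j hj _ _ => ?_) (fun e i hi _ _ => ?_) h hx hy
  · rcases hS hab with h | h
    exacts [absurd ⟨a, h, rfl⟩ ha, absurd ⟨b, h, rfl⟩ hb]
  · simp [c, hi]
  · simp [c, hj]
  · simp [c, hi, (hqe.tsub even_two).natCast_zmod_two]

def addPathsProj (o : G.edgeSet → V × V) {n : ℕ} : V ⊕ (G.edgeSet × Fin n) → V :=
  Sum.elim id fun x => (o x.1).1

theorem addPaths_adj_proj (ho : ∀ e : G.edgeSet, s((o e).1, (o e).2) = (e : Sym2 V))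
    {x y : V ⊕ (G.edgeSet × Fin (q - 1))} (h : (addPaths G q o).Adj x y) :
    addPathsProj o x = addPathsProj o y ∨ G.Adj (addPathsProj o x) (addPathsProj o y) :=
  addPaths_adj_induction
    (P := fun x y =>
      addPathsProj o x = addPathsProj o y ∨ G.Adj (addPathsProj o x) (addPathsProj o y))
    (fun _ _ h => h.imp Eq.symm Adj.symm) (fun _ _ h => .inr h)
    (fun _ _ _ => .inl rfl) (fun _ _ _ _ => .inl rfl)
    (fun e _ _ => .inr (addPaths_endpoints_adj ho e)) h

theorem IsOCT.isVC_image_addPathsProj (hq : q ≠ 0) (hqe : Even q)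
    (ho : ∀ e : G.edgeSet, s((o e).1, (o e).2) = (e : Sym2 V))
    {S' : Set (V ⊕ (G.edgeSet × Fin (q - 1)))} (hS' : IsOCT (addPaths G q o) S') :
    IsVC G (addPathsProj o '' S') := by
  intro a b hab
  by_cases ha : inl a ∈ S'
  · exact .inl ⟨_, ha, rfl⟩
  by_cases hb : inl b ∈ S'
  · exact .inr ⟨_, hb, rfl⟩
  let e : G.edgeSet := ⟨s(a, b), hab⟩
  have hends : ((o e).1 = a ∧ (o e).2 = b) ∨ ((o e).1 = b ∧ (o e).2 = a) :=
    Sym2.eq_iff.1 (ho e)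
  obtain ⟨i, hi⟩ := hS'.exists_inr_mem_of_endpoints_not_mem hq hqe ho e
    (by rcases hends with ⟨h, -⟩ | ⟨h, -⟩ <;> rwa [h])
    (by rcases hends with ⟨-, h⟩ | ⟨-, h⟩ <;> rwa [h])
  have hmem : (o e).1 ∈ addPathsProj o '' S' := ⟨_, hi, rfl⟩
  rcases hends with ⟨h, -⟩ | ⟨h, -⟩ <;> rw [h] at hmem
  exacts [.inl hmem, .inr hmem]

end addPaths

/-- Let `G'` be obtained from `G` by adding, for each edge `uv`, a new path of even
length `2⌊p/2⌋` between `u` and `v` (keeping the edge `uv`). Then for every `k`, `G` has a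
connected vertex cover of size at most `k` iff `G'` has a connected odd cycle transversal of
size at most `k`. -/
theorem connected_vc_iff_connected_oct_of_gadget {V : Type*} [Fintype V] (G : SimpleGraph V)
    (p : ℕ) (hp : 3 ≤ p) (o : G.edgeSet → V × V)
    (ho : ∀ e : G.edgeSet, s((o e).1, (o e).2) = (e : Sym2 V)) (k : ℕ) :
    (∃ S : Set V, IsVC G S ∧ ConnSet G S ∧ S.ncard ≤ k) ↔
      (∃ S' : Set (V ⊕ (G.edgeSet × Fin (2 * (p / 2) - 1))),
        IsOCT (addPaths G (2 * (p / 2)) o) S' ∧ ConnSet (addPaths G (2 * (p / 2)) o) S' ∧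
          S'.ncard ≤ k) := by
  have hq : 2 * (p / 2) ≠ 0 := by omega
  have hqe : Even (2 * (p / 2)) := even_two_mul _
  constructor
  · rintro ⟨S, hVC, hconn, hcard⟩
    exact ⟨inl '' S, hVC.isOCT_addPaths_image_inl hqe,
      hconn.image inl fun _ _ _ _ h => .inr (addPaths_adj_inl h),
      (Set.ncard_image_le S.toFinite).trans hcard⟩
  · rintro ⟨S', hOCT, hconn, hcard⟩
    exact ⟨addPathsProj o '' S', hOCT.isVC_image_addPathsProj hq hqe ho,
      hconn.image _ fun _ _ _ _ => addPaths_adj_proj ho,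
      (Set.ncard_image_le S'.toFinite).trans hcard⟩
end Paper
end

section
/- Let G be a graph with n ≥ 3 vertices and m edges, and let G' be obtained from G by adding vertices x and y each adjacent to all vertices of G, plus pendant vertices x' adjacent only to x and y' adjacent only to y. Then G has a Hamiltonian path if and only if G' has a Hamiltonian path, and moreover every Hamiltonian path of G' has endpoints x' and y'. -/
open SimpleGraph

namespace Paper

variable {V : Type*}

/-- The graph `G'` obtained from `G` by adding vertices `x = Sum.inr 0` and `y = Sum.inr 1`, each
adjacent to all vertices of `G`, plus pendant vertices `x' = Sum.inr 2` adjacent only to `x` and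
`y' = Sum.inr 3` adjacent only to `y`. -/
def hamExt (G : SimpleGraph V) : SimpleGraph (V ⊕ Fin 4) :=
  SimpleGraph.fromRel fun a b =>
    (∃ u v : V, a = Sum.inl u ∧ b = Sum.inl v ∧ G.Adj u v) ∨
    (∃ u : V, a = Sum.inr 0 ∧ b = Sum.inl u) ∨
    (∃ u : V, a = Sum.inr 1 ∧ b = Sum.inl u) ∨
    (a = Sum.inr 0 ∧ b = Sum.inr 2) ∨
    (a = Sum.inr 1 ∧ b = Sum.inr 3)

/-- `G` has a Hamiltonian path. -/
def HasHamPath [DecidableEq V] (G : SimpleGraph V) : Prop :=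
  ∃ (a b : V) (p : G.Walk a b), p.IsHamiltonian

end Paper

/-! The pendant vertices `x'` and `y'` have a single neighbour each, and an inner vertex of a path
has two, so every Hamiltonian path of `G'` runs `x' x … y y'`. Removing both ends of it twice
leaves a path through exactly the vertices of `G`. Conversely, a Hamiltonian path `P` of `G`
extends to the Hamiltonian path `x' x P y y'` of `G'`. -/

namespace SimpleGraph.Walk

variable {W : Type*} {H : SimpleGraph W} {u v w : W}

theorem IsPath.eq_start_or_eq_end_of_subsingleton {p : H.Walk u v} (hp : p.IsPath)
    (hw : w ∈ p.support) (hN : (H.neighborSet w).Subsingleton) : w = u ∨ w = v := by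
  obtain ⟨i, rfl, hi⟩ := mem_support_iff_exists_getVert.mp hw
  by_contra! hend
  have hi0 : i ≠ 0 := by rintro rfl; simp at hend
  have hil : i < p.length := lt_of_le_of_ne hi (by rintro rfl; simp at hend)
  have hprev : H.Adj (p.getVert i) (p.getVert (i - 1)) := by
    simpa [Nat.sub_add_cancel (Nat.pos_of_ne_zero hi0)] using
      (p.adj_getVert_succ (i := i - 1) (by omega)).symm
  have hsame := hN hprev (p.adj_getVert_succ hil)
  have := hp.getVert_injOn (by simp; omega) (by simp; omega) hsame
  omega

theorem IsPath.mem_support_tail_dropLast_iff {p : H.Walk u v} (hp : p.IsPath) (h : p.snd ≠ v) :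
    w ∈ p.tail.dropLast.support ↔ w ∈ p.support ∧ w ≠ u ∧ w ≠ v := by
  have hsupp : p.support = u :: (p.tail.dropLast.support ++ [v]) := by
    rw [support_dropLast_concat (not_nil_of_ne h), cons_support_tail]
    exact fun hnil => h (p.getVert_of_length_le (by simp [length_eq_zero_iff.mpr hnil]))
  have hnd := hp.support_nodup
  rw [hsupp] at hnd ⊢
  grind

theorem IsPath.isHamiltonian_induce [DecidableEq W] {p : H.Walk u v} (hp : p.IsPath) {s : Set W}
    (hs : ∀ w, w ∈ p.support ↔ w ∈ s) : (p.induce s fun w => (hs w).1).IsHamiltonian :=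
  IsPath.isHamiltonian_of_mem
    (.mk' (List.Nodup.of_map Subtype.val (by simpa using hp.support_nodup))) fun w => by simp [hs]

end SimpleGraph.Walk

namespace Paper

open Sum

variable {V : Type*} {G : SimpleGraph V}

@[simp] theorem hamExt_adj_inl_inl {u v : V} : (hamExt G).Adj (inl u) (inl v) ↔ G.Adj u v := by
  simpa [hamExt, adj_comm] using Adj.ne

@[simp] theorem hamExt_adj_inl_inr {u : V} {i : Fin 4} :
    (hamExt G).Adj (inl u) (inr i) ↔ i = 0 ∨ i = 1 := by
  simp [hamExt, eq_comm]

@[simp] theorem hamExt_adj_inr_inl {u : V} {i : Fin 4} :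
    (hamExt G).Adj (inr i) (inl u) ↔ i = 0 ∨ i = 1 := by
  simp [hamExt, eq_comm]

@[simp] theorem hamExt_adj_inr_inr {i j : Fin 4} :
    (hamExt G).Adj (inr i) (inr j) ↔ s(i, j) = s(0, 2) ∨ s(i, j) = s(1, 3) := by
  simp [hamExt]
  omega

theorem hamExt_adj_x' {c : V ⊕ Fin 4} : (hamExt G).Adj (inr 2) c ↔ c = inr 0 := by
  rcases c with u | i
  · simp
  · fin_cases i <;> simp

theorem hamExt_adj_y' {c : V ⊕ Fin 4} : (hamExt G).Adj (inr 3) c ↔ c = inr 1 := by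
  rcases c with u | i
  · simp
  · fin_cases i <;> simp

theorem hamExt_endpoints [DecidableEq V] {a b : V ⊕ Fin 4} {p : (hamExt G).Walk a b}
    (hp : p.IsHamiltonian) : ({a, b} : Set (V ⊕ Fin 4)) = {inr 2, inr 3} := by
  have hx' := hp.isPath.eq_start_or_eq_end_of_subsingleton (hp.mem_support (inr 2))
    (Set.subsingleton_singleton.anti fun _ => hamExt_adj_x'.mp)
  have hy' := hp.isPath.eq_start_or_eq_end_of_subsingleton (hp.mem_support (inr 3))
    (Set.subsingleton_singleton.anti fun _ => hamExt_adj_y'.mp)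
  rcases hx' with rfl | rfl <;> rcases hy' with h | h <;> simp_all [Set.pair_comm]

def hamExtInl (G : SimpleGraph V) : G ↪g hamExt G where
  toFun := inl
  inj' := inl_injective
  map_rel_iff' := hamExt_adj_inl_inl

theorem HasHamPath.to_hamExt [DecidableEq V] (h : HasHamPath G) : HasHamPath (hamExt G) := by
  obtain ⟨a, b, p, hp⟩ := h
  obtain ⟨p', hp'⟩ : ∃ p' : (hamExt G).Walk (inl a) (inl b), p'.support = p.support.map inl :=
    ⟨p.map (hamExtInl G).toHom, Walk.support_map _ _⟩
  have hx'x : (hamExt G).Adj (inr 2) (inr 0) := by simp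
  have hxa : (hamExt G).Adj (inr 0) (inl a) := by simp
  have hby : (hamExt G).Adj (inl b) (inr 1) := by simp
  have hyy' : (hamExt G).Adj (inr 1) (inr 3) := by simp
  let q := (((p'.cons hxa).cons hx'x).concat hby).concat hyy'
  have hq : q.support = inr 2 :: inr 0 :: (p.support.map inl ++ [inr 1, inr 3]) := by
    simp [q, hp']
  refine ⟨_, _, q, Walk.IsPath.isHamiltonian_of_mem (.mk' ?_) ?_⟩
  · rw [hq]
    simp [List.nodup_append, hp.isPath.support_nodup.map inl_injective]
  · rintro (u | i)
    · simp [hq, hp.mem_support]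
    · fin_cases i <;> simp [hq]

theorem hasHamPath_of_isHamiltonian_hamExt [DecidableEq V]
    {p : (hamExt G).Walk (inr 2) (inr 3)} (hp : p.IsHamiltonian) : HasHamPath G := by
  have hsnd : p.snd = inr 0 := hamExt_adj_x'.mp (p.adj_snd (Walk.not_nil_of_ne (by simp)))
  have htail : p.snd ≠ inr 3 := by simp [hsnd]
  have hpen : p.tail.penultimate = inr 1 :=
    hamExt_adj_y'.mp (p.tail.adj_penultimate (Walk.not_nil_of_ne htail)).symm
  have hinner := hp.isPath.tail.dropLast
  have hqsnd : p.tail.dropLast.snd ≠ p.tail.penultimate := by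
    intro h
    have := p.tail.dropLast.adj_snd (Walk.not_nil_of_ne (by simp [hsnd, hpen]))
    rw [h, hpen, hsnd] at this
    simp at this
  have hr : ∀ w, w ∈ p.tail.dropLast.tail.dropLast.support ↔ w ∈ Set.range inl := by
    intro w
    rw [hinner.mem_support_tail_dropLast_iff hqsnd, hp.isPath.mem_support_tail_dropLast_iff htail,
      hpen, hsnd]
    rcases w with u | i
    · simp [hp.mem_support]
    · fin_cases i <;> simp
  let e := (hamExtInl G).isoInduceRange.symm
  exact ⟨_, _, _, (hinner.tail.dropLast.isHamiltonian_induce hr).map e.toHom e.bijective⟩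

theorem HasHamPath.of_hamExt [DecidableEq V] (h : HasHamPath (hamExt G)) : HasHamPath G := by
  obtain ⟨a, b, p, hp⟩ := h
  rcases Set.pair_eq_pair_iff.mp (hamExt_endpoints hp) with ⟨rfl, rfl⟩ | ⟨rfl, rfl⟩
  · exact hasHamPath_of_isHamiltonian_hamExt hp
  · exact hasHamPath_of_isHamiltonian_hamExt
      (hp.isPath.reverse.isHamiltonian_of_mem (by simp [hp.mem_support]))

theorem ham_path_extension_general {V : Type*} [DecidableEq V] (G : SimpleGraph V) :
    (HasHamPath G ↔ HasHamPath (hamExt G)) ∧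
    (∀ (a b : V ⊕ Fin 4) (p : (hamExt G).Walk a b), p.IsHamiltonian →
      ({a, b} : Set (V ⊕ Fin 4)) = {Sum.inr 2, Sum.inr 3}) :=
  ⟨⟨HasHamPath.to_hamExt, HasHamPath.of_hamExt⟩, fun _ _ _ => hamExt_endpoints⟩

/-- For a graph `G` on `n ≥ 3` vertices, `G` has a Hamiltonian path iff `G'` has a
Hamiltonian path; moreover every Hamiltonian path of `G'` has endpoints `x'` and `y'`. -/
theorem ham_path_extension {V : Type*} [Fintype V] [DecidableEq V] (G : SimpleGraph V)
    (hn : 3 ≤ Fintype.card V) :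
    (HasHamPath G ↔ HasHamPath (hamExt G)) ∧
    (∀ (a b : V ⊕ Fin 4) (p : (hamExt G).Walk a b), p.IsHamiltonian →
      ({a, b} : Set (V ⊕ Fin 4)) = {Sum.inr 2, Sum.inr 3}) :=
  ham_path_extension_general G

end Paper
end
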